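/- arXiv:1410.7242 — 5 statements merged into one kernel-verified Lean document; each statement's English description precedes it below -/
import Mathlib

section
/- Let X be a separable infinite-dimensional complex Banach space, let n ≥ 1, and let S be a bounded linear operator on X that is a generalised backward n-shift adapted to a family of linearly independent vectors {x^ℓ_k : 1 ≤ ℓ ≤ n, k ≥ 1} with dense linear span. Then every x^ℓ_k belongs to N∞(S) ∩ R∞(S), the intersection of the generalised kernel and the hyperrange of S. -/
/-!
Everything is well-founded induction along the lexicographic order. Since `S x_p` lies in the
span of the strict predecessors of `x_p`, and the generalised kernel contains `v` whenever it
contains `S v`, every `x_p` lies in the generalised kernel. Since the coefficient of `x^ℓ_k` in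
`S x^ℓ_{k+1}` is nonzero, `x^ℓ_k` lies in the span of `S x^ℓ_{k+1}` and the strict predecessors
of `x^ℓ_k`; so once all `x_q` lie in the range of `S ^ r`, induction along the order puts them
all in the range of `S ^ (r + 1)`.
-/

/-- `S` is a generalised backward shift adapted to the family `x` indexed by `ι × ℕ`
(with the second index 0-based, so `x (ℓ, 0)` plays the role of `x^ℓ_1`), where the
index set carries the lexicographic order: `S x^ℓ_k` is a finite linear combination of
the `x^p_q` with `(p,q) <lex (ℓ,k)`, in which, when `k > 0`, the coefficient of the
immediate predecessor `x^ℓ_{k-1}` is nonzero. -/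
def IsGenBackwardShift {X : Type*} [NormedAddCommGroup X] [NormedSpace ℂ X]
    {ι : Type*} [Preorder ι] (S : X →L[ℂ] X) (x : ι × ℕ → X) : Prop :=
  ∀ p : ι × ℕ, ∃ c : (ι × ℕ) →₀ ℂ,
    (∀ q ∈ c.support, Prod.Lex (· < ·) (· < ·) q p) ∧
    S (x p) = c.sum (fun q a => a • x q) ∧
    (1 ≤ p.2 → c (p.1, p.2 - 1) ≠ 0)

open Submodule

namespace Module.End

variable {R M : Type*} [Semiring R] [AddCommMonoid M] [Module R M]

theorem mem_iSup_ker_pow_iff (f : End R M) (v : M) :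
    v ∈ ⨆ m, LinearMap.ker (f ^ m) ↔ ∃ m, (f ^ m) v = 0 := by
  have hmono : Monotone fun m : ℕ => LinearMap.ker (f ^ m) := by
    intro m m' hle w hw
    rw [LinearMap.mem_ker] at hw ⊢
    rw [← Nat.sub_add_cancel hle, pow_add, mul_apply, hw, map_zero]
  simp only [mem_iSup_of_directed _ hmono.directed_le, LinearMap.mem_ker]

theorem mem_iSup_ker_pow_of_apply_mem (f : End R M) {v : M}
    (hv : f v ∈ ⨆ m, LinearMap.ker (f ^ m)) : v ∈ ⨆ m, LinearMap.ker (f ^ m) := by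
  obtain ⟨m, hm⟩ := (f.mem_iSup_ker_pow_iff _).1 hv
  exact (f.mem_iSup_ker_pow_iff v).2 ⟨m + 1, by rwa [pow_succ, mul_apply]⟩

end Module.End

theorem Prod.lex_lt_of_lex_lt_succ {ι : Type*} [Preorder ι] {q : ι × ℕ} {ℓ : ι} {k : ℕ}
    (hq : Prod.Lex (· < ·) (· < ·) q (ℓ, k + 1)) (hne : q ≠ (ℓ, k)) :
    Prod.Lex (· < ·) (· < ·) q (ℓ, k) := by
  obtain ⟨q₁, q₂⟩ := q
  rcases Prod.lex_iff.1 hq with h | ⟨rfl, h⟩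
  · exact Prod.Lex.left _ _ h
  · exact Prod.Lex.right _ (lt_of_le_of_ne (Nat.lt_succ_iff.1 h) fun h' => hne (by rw [h']))

theorem Prod.wellFounded_lex_lt {α β : Type*} [Preorder α] [Preorder β]
    [WellFoundedLT α] [WellFoundedLT β] :
    WellFounded (Prod.Lex ((· < ·) : α → α → Prop) ((· < ·) : β → β → Prop)) :=
  WellFounded.prod_lex wellFounded_lt wellFounded_lt

namespace IsGenBackwardShift

variable {X : Type*} [NormedAddCommGroup X] [NormedSpace ℂ X] {ι : Type*} [Preorder ι]
  {S : X →L[ℂ] X} {x : ι × ℕ → X}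

theorem apply_mem_span_lex_lt (h : IsGenBackwardShift S x) (p : ι × ℕ) :
    S (x p) ∈ span ℂ (x '' {q | Prod.Lex (· < ·) (· < ·) q p}) := by
  obtain ⟨c, hsupp, heq, -⟩ := h p
  rw [heq, Finsupp.sum]
  exact sum_mem fun q hq => smul_mem _ _ (subset_span ⟨q, hsupp q hq, rfl⟩)

theorem mem_span_apply_succ (h : IsGenBackwardShift S x) (ℓ : ι) (k : ℕ) :
    x (ℓ, k) ∈
      span ℂ (insert (S (x (ℓ, k + 1))) (x '' {q | Prod.Lex (· < ·) (· < ·) q (ℓ, k)})) := by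
  classical
  obtain ⟨c, hsupp, heq, hne⟩ := h (ℓ, k + 1)
  have hc : c (ℓ, k) ≠ 0 := hne (Nat.le_add_left 1 k)
  have hsum : S (x (ℓ, k + 1)) =
      c (ℓ, k) • x (ℓ, k) + ∑ q ∈ c.support.erase (ℓ, k), c q • x q := by
    rw [heq, Finsupp.sum, ← Finset.add_sum_erase _ _ (Finsupp.mem_support_iff.2 hc)]
  have hsolve : x (ℓ, k) = (c (ℓ, k))⁻¹ •
      (S (x (ℓ, k + 1)) - ∑ q ∈ c.support.erase (ℓ, k), c q • x q) := by
    rw [hsum, add_sub_cancel_right, smul_smul, inv_mul_cancel₀ hc, one_smul]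
  rw [hsolve]
  refine smul_mem _ _ (sub_mem (subset_span (Set.mem_insert _ _)) (sum_mem fun q hq => ?_))
  have hlt := Prod.lex_lt_of_lex_lt_succ (hsupp q (Finset.mem_of_mem_erase hq))
    (Finset.ne_of_mem_erase hq)
  exact smul_mem _ _ (subset_span (Set.mem_insert_of_mem _ ⟨q, hlt, rfl⟩))

variable [WellFoundedLT ι]

theorem mem_iSup_ker_pow (h : IsGenBackwardShift S x) (p : ι × ℕ) :
    x p ∈ ⨆ m, LinearMap.ker ((S : X →ₗ[ℂ] X) ^ m) := by
  induction p using (Prod.wellFounded_lex_lt (α := ι) (β := ℕ)).induction with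
  | _ p ih =>
    refine Module.End.mem_iSup_ker_pow_of_apply_mem _ (span_le.2 ?_ (h.apply_mem_span_lex_lt p))
    rintro _ ⟨q, hq, rfl⟩
    exact ih q hq

theorem mem_range_pow (h : IsGenBackwardShift S x) (r : ℕ) (p : ι × ℕ) :
    x p ∈ LinearMap.range ((S : X →ₗ[ℂ] X) ^ r) := by
  induction r generalizing p with
  | zero => exact ⟨x p, rfl⟩
  | succ r ihr =>
    induction p using (Prod.wellFounded_lex_lt (α := ι) (β := ℕ)).induction with
    | _ p ihp =>
      obtain ⟨ℓ, k⟩ := p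
      refine span_le.2 (Set.insert_subset ?_ ?_) (h.mem_span_apply_succ ℓ k)
      · obtain ⟨y, hy⟩ := ihr (ℓ, k + 1)
        exact ⟨y, by rw [pow_succ', Module.End.mul_apply, hy, ContinuousLinearMap.coe_coe]⟩
      · rintro _ ⟨q, hq, rfl⟩
        exact ihp q hq

end IsGenBackwardShift

theorem stmt2_general {X : Type*} [NormedAddCommGroup X] [NormedSpace ℂ X]
    (n : ℕ) (S : X →L[ℂ] X) (x : Fin n × ℕ → X)
    (hshift : IsGenBackwardShift S x) :
    ∀ p : Fin n × ℕ,
      (∃ m : ℕ, 1 ≤ m ∧ (S ^ m) (x p) = 0) ∧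
      (∀ r : ℕ, 1 ≤ r → ∃ y : X, (S ^ r) y = x p) := by
  intro p
  obtain ⟨m, hm⟩ := (Module.End.mem_iSup_ker_pow_iff _ _).1 (hshift.mem_iSup_ker_pow p)
  refine ⟨⟨m + 1, Nat.le_add_left 1 m, ?_⟩, fun r _ => ?_⟩
  · rw [← ContinuousLinearMap.toLinearMap_pow, ContinuousLinearMap.coe_coe] at hm
    rw [pow_succ', mul_apply_eq_comp, hm, map_zero]
  · obtain ⟨y, hy⟩ := hshift.mem_range_pow r p
    rw [← ContinuousLinearMap.toLinearMap_pow] at hy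
    exact ⟨y, hy⟩

theorem stmt2 {X : Type*} [NormedAddCommGroup X] [NormedSpace ℂ X] [CompleteSpace X]
    [TopologicalSpace.SeparableSpace X] (hinf : ¬ FiniteDimensional ℂ X)
    (n : ℕ) (hn : 1 ≤ n) (S : X →L[ℂ] X) (x : Fin n × ℕ → X)
    (hli : LinearIndependent ℂ x)
    (hdense : Dense (Submodule.span ℂ (Set.range x) : Set X))
    (hshift : IsGenBackwardShift S x) :
    ∀ p : Fin n × ℕ,
      (∃ m : ℕ, 1 ≤ m ∧ (S ^ m) (x p) = 0) ∧
      (∀ r : ℕ, 1 ≤ r → ∃ y : X, (S ^ r) y = x p) :=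
  stmt2_general n S x hshift
end

section
/- Let X be a separable infinite-dimensional complex Banach space and let S be a bounded linear operator on X that is a generalised backward ∞-shift adapted to a family of linearly independent vectors {x^ℓ_k : ℓ ≥ 1, k ≥ 1} with dense linear span. Then every x^ℓ_k belongs to N∞(S) ∩ R∞(S), the intersection of the generalised kernel and the hyperrange of S. -/
theorem stmt3 {X : Type*} [NormedAddCommGroup X] [NormedSpace ℂ X] [CompleteSpace X]
    [TopologicalSpace.SeparableSpace X] (hinf : ¬ FiniteDimensional ℂ X)
    (S : X →L[ℂ] X) (x : ℕ × ℕ → X)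
    (hli : LinearIndependent ℂ x)
    (hdense : Dense (Submodule.span ℂ (Set.range x) : Set X))
    (hshift : IsGenBackwardShift S x) :
    ∀ p : ℕ × ℕ,
      (∃ m : ℕ, 1 ≤ m ∧ (S ^ m) (x p) = 0) ∧
      (∀ r : ℕ, 1 ≤ r → ∃ y : X, (S ^ r) y = x p) := by
  have wf : WellFounded (Prod.Lex ((·<·) : ℕ→ℕ→Prop) ((·<·) : ℕ→ℕ→Prop)) :=
    WellFounded.prod_lex (Nat.lt_wfRel.wf) (Nat.lt_wfRel.wf)
  have hker0 : ∀ p : ℕ × ℕ, ∃ m, ∀ n, m ≤ n → (S ^ n) (x p) = 0 := by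
    intro p
    refine wf.induction (C := fun p => ∃ m, ∀ n, m ≤ n → (S ^ n) (x p) = 0) p ?_
    intro p ih
    obtain ⟨c, hsupp, heq, -⟩ := hshift p
    choose m hm using fun q : c.support => ih q (hsupp q q.2)
    refine ⟨c.support.sup (fun q => if h : q ∈ c.support then m ⟨q, h⟩ else 0) + 1, ?_⟩
    intro n hn
    obtain ⟨k, rfl⟩ : ∃ k, n = k + 1 := ⟨n - 1, by omega⟩
    have h1 : (S ^ (k+1)) (x p) = (S ^ k) (S (x p)) := by
      rw [pow_succ]; rfl
    rw [h1, heq, Finsupp.sum, map_sum]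
    refine Finset.sum_eq_zero ?_
    intro q hq
    rw [map_smul, hm ⟨q, hq⟩ k ?_, smul_zero]
    have := Finset.le_sup (f := fun q => if h : q ∈ c.support then m ⟨q, h⟩ else 0) hq
    simp only [hq, dif_pos] at this
    omega
  have hrange : ∀ r : ℕ, ∀ p : ℕ × ℕ, ∃ y, (S ^ r) y = x p := by
    intro r
    induction r with
    | zero => intro p; exact ⟨x p, rfl⟩
    | succ r ihr =>
      intro p
      refine wf.induction (C := fun p => ∃ y, (S ^ (r+1)) y = x p) p ?_
      intro p ih
      obtain ⟨c, hsupp, heq, hc⟩ := hshift (p.1, p.2 + 1)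
      have hc0 : c (p.1, p.2) ≠ 0 := by simpa using hc (by omega)
      have hpmem : (p.1, p.2) ∈ c.support := Finsupp.mem_support_iff.2 hc0
      have hlt : ∀ q ∈ c.support.erase (p.1, p.2), Prod.Lex (·<·) (·<·) q p := by
        intro q hq
        have hne := Finset.ne_of_mem_erase hq
        have hl := hsupp q (Finset.mem_of_mem_erase hq)
        rw [Prod.lex_iff] at hl ⊢
        rcases hl with h | ⟨h1, h2⟩
        · exact Or.inl h
        · refine Or.inr ⟨h1, ?_⟩
          have h3 : q.2 ≠ p.2 := fun h' => hne (Prod.ext h1 h')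
          simp only [] at h2
          omega
      choose y hy using fun q : (c.support.erase (p.1, p.2)) => ih q (hlt q q.2)
      obtain ⟨z, hz⟩ := ihr (p.1, p.2 + 1)
      refine ⟨(c (p.1, p.2))⁻¹ • (z - ∑ q ∈ (c.support.erase (p.1, p.2)).attach, c q • y q), ?_⟩
      have hTz : (S ^ (r+1)) z = S (x (p.1, p.2 + 1)) := by
        rw [pow_succ', ContinuousLinearMap.mul_apply, hz]
      rw [map_smul, map_sub, map_sum, hTz, heq]
      have hsum : (c.sum fun q a => a • x q) =
          c (p.1, p.2) • x (p.1, p.2) + ∑ q ∈ c.support.erase (p.1, p.2), c q • x q := by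
        rw [Finsupp.sum, ← Finset.add_sum_erase _ _ hpmem]
      have hsum2 : ∑ q ∈ (c.support.erase (p.1, p.2)).attach, (S ^ (r+1)) (c q • y q)
          = ∑ q ∈ c.support.erase (p.1, p.2), c q • x q := by
        rw [← Finset.sum_attach (c.support.erase (p.1, p.2)) (fun q => c q • x q)]
        refine Finset.sum_congr rfl ?_
        intro q _
        rw [map_smul, hy q]
      rw [hsum, hsum2, add_sub_cancel_right, smul_smul, inv_mul_cancel₀ hc0, one_smul]
  intro p
  refine ⟨?_, fun r _ => hrange r p⟩
  obtain ⟨m, hm⟩ := hker0 p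
  exact ⟨m + 1, by omega, hm (m + 1) (by omega)⟩
end

section
/- Let X be a separable infinite-dimensional complex Banach space, let S be a bounded linear operator on X that is a generalised backward 1-shift adapted to a linearly independent sequence (x_k)_{k≥1} with dense linear span, and let λ ∈ ℂ with |λ| = 1. Then λI + S is mixing. -/
/-- A bounded operator `T` on `X` is mixing: for every pair of nonempty open sets
`U, V` there is `N` such that `T^n(U) ∩ V ≠ ∅` for all `n > N`. -/
def IsMixingOp {X : Type*} [NormedAddCommGroup X] [NormedSpace ℂ X]
    (T : X →L[ℂ] X) : Prop :=
  ∀ U V : Set X, IsOpen U → IsOpen V → U.Nonempty → V.Nonempty →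
    ∃ N : ℕ, ∀ n : ℕ, N < n → ((fun v => (T ^ n) v) '' U ∩ V).Nonempty

/-- `S` is a generalised backward 1-shift adapted to the sequence `x` (indexed from 0,
so `x 0` plays the role of `x₁`): `S x₀ = 0`, and for `k ≥ 1`, `S xₖ` is a linear
combination of `x₀, …, x_{k-1}` in which the coefficient of `x_{k-1}` is nonzero. -/
def IsGenBackwardOneShift {X : Type*} [NormedAddCommGroup X] [NormedSpace ℂ X]
    (S : X →L[ℂ] X) (x : ℕ → X) : Prop :=
  S (x 0) = 0 ∧
    ∀ k : ℕ, 1 ≤ k → ∃ c : ℕ → ℂ,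
      S (x k) = ∑ i ∈ Finset.range k, c i • x i ∧ c (k - 1) ≠ 0

/-!
Extend `x` to a Jordan chain `Y` of `S` (`S Y₀ = 0`, `S Yₖ₊₁ = Yₖ`) with dense span; on it
`T = λ + S` acts by `Tⁿ Yₖ = ∑ⱼ C(n, k - j) λ^(n - k + j) Yⱼ`. The pairs `(u, v)` such that, for
every `ε` and all large `n`, some `ε`-perturbation of `u` is mapped by `Tⁿ` into the `ε`-ball
around `v` form a subspace, so it suffices to treat `(Yᵢ, 0)` and `(0, Yᵢ)`. Both amount to
solving `Tⁿ z ≈ ∑_{j<q} cⱼ Yⱼ` with `|cⱼ| ≤ n^(q-j-1)`, which is done with `z = ∑ₗ αₗ Y_{κₗ+l}`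
for depths `κₗ` growing so fast that, once the unknowns are suitably weighted, the `q × q`
system for `α` is diagonally dominant uniformly in `n`. The resulting `α` make both `z` and the
error left in the coordinates `Yⱼ`, `j ≥ q`, of size `O(1/n)`.
-/

open Finset Filter

namespace Nat

theorem choose_add_mul_pow_le (n k p : ℕ) :
    n.choose (k + p) * (k + 1) ^ p ≤ n.choose k * n ^ p := by
  induction p with
  | zero => simp
  | succ p ih =>
    have h := Nat.choose_succ_right_eq n (k + p)
    calc n.choose (k + (p + 1)) * (k + 1) ^ (p + 1)
        ≤ n.choose (k + p + 1) * (k + p + 1) * (k + 1) ^ p := by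
          rw [pow_succ, ← add_assoc]; nlinarith [Nat.zero_le (n.choose (k + p + 1) * (k + 1) ^ p)]
      _ = n.choose (k + p) * (k + 1) ^ p * (n - (k + p)) := by rw [h]; ring
      _ ≤ n.choose k * n ^ p * n := Nat.mul_le_mul ih (Nat.sub_le _ _)
      _ = n.choose k * n ^ (p + 1) := by ring

theorem choose_sub_mul_pow_le {n k p : ℕ} (hp : p ≤ k) (hk : 2 * k ≤ n) :
    n.choose (k - p) * n ^ p ≤ n.choose k * (2 * k) ^ p := by
  induction p with
  | zero => simp
  | succ p ih =>
    have h := Nat.choose_succ_right_eq n (k - (p + 1))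
    rw [show k - (p + 1) + 1 = k - p by omega] at h
    calc n.choose (k - (p + 1)) * n ^ (p + 1)
        = n.choose (k - (p + 1)) * n * n ^ p := by ring
      _ ≤ n.choose (k - (p + 1)) * (2 * (n - (k - (p + 1)))) * n ^ p :=
          Nat.mul_le_mul_right _ (Nat.mul_le_mul_left _ (by omega))
      _ = 2 * (n.choose (k - (p + 1)) * (n - (k - (p + 1)))) * n ^ p := by ring
      _ = 2 * (k - p) * (n.choose (k - p) * n ^ p) := by rw [← h]; ring
      _ ≤ 2 * k * (n.choose k * (2 * k) ^ p) := Nat.mul_le_mul (by omega) (ih (by omega))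
      _ = n.choose k * (2 * k) ^ (p + 1) := by ring

end Nat

namespace Matrix

variable {ι 𝕜 : Type*} [Fintype ι] [DecidableEq ι] [NormedField 𝕜] {G : Matrix ι ι 𝕜}
  {s : ι → ℝ}

/- Row `i` of a coordinate maximising `‖α i‖ / s i` bounds that maximum by `2 * B`. -/
theorem norm_le_of_diag_dominant (hs : ∀ i, 0 < s i) (hdiag : ∀ i, G i i ≠ 0)
    (hdom : ∀ i, ∑ l ∈ univ.erase i, ‖G i l‖ * s l ≤ ‖G i i‖ * s i / 2) {α : ι → 𝕜} {B : ℝ}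
    (hα : ∀ i, ‖(G *ᵥ α) i‖ ≤ B * (‖G i i‖ * s i)) (l : ι) : ‖α l‖ ≤ 2 * B * s l := by
  obtain ⟨i, -, hi⟩ := exists_max_image univ (fun l => ‖α l‖ / s l) ⟨l, mem_univ l⟩
  set t := ‖α i‖ / s i
  have hαt : ∀ l, ‖α l‖ ≤ t * s l := fun l => (div_le_iff₀ (hs l)).mp (hi l (mem_univ l))
  have hGi : 0 < ‖G i i‖ * s i := mul_pos (norm_pos_iff.mpr (hdiag i)) (hs i)
  have hrow : G i i * α i = (G *ᵥ α) i - ∑ l ∈ univ.erase i, G i l * α l := by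
    rw [mulVec, dotProduct, ← add_sum_erase _ _ (mem_univ i)]; ring
  have hoff : ‖∑ l ∈ univ.erase i, G i l * α l‖ ≤ t * (‖G i i‖ * s i / 2) := by
    calc _ ≤ ∑ l ∈ univ.erase i, ‖G i l‖ * (t * s l) := by
            refine (norm_sum_le _ _).trans (sum_le_sum fun l _ => ?_)
            rw [norm_mul]; exact mul_le_mul_of_nonneg_left (hαt l) (norm_nonneg _)
      _ = t * ∑ l ∈ univ.erase i, ‖G i l‖ * s l := by rw [mul_sum]; congr 1; ext; ring
      _ ≤ _ := mul_le_mul_of_nonneg_left (hdom i) (div_nonneg (norm_nonneg _) (hs i).le)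
  have ht : t * (‖G i i‖ * s i) ≤ (B + t / 2) * (‖G i i‖ * s i) := by
    calc t * (‖G i i‖ * s i) = ‖G i i * α i‖ := by
          rw [norm_mul, ← div_mul_cancel₀ ‖α i‖ (hs i).ne']; ring
      _ ≤ _ := by rw [hrow]; refine (norm_sub_le _ _).trans ?_; linarith [hα i]
  have ht2 : t ≤ 2 * B := by nlinarith
  calc ‖α l‖ ≤ t * s l := hαt l
    _ ≤ 2 * B * s l := mul_le_mul_of_nonneg_right ht2 (hs l).le

theorem exists_mulVec_eq_of_diag_dominant (hs : ∀ i, 0 < s i) (hdiag : ∀ i, G i i ≠ 0)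
    (hdom : ∀ i, ∑ l ∈ univ.erase i, ‖G i l‖ * s l ≤ ‖G i i‖ * s i / 2) (c : ι → 𝕜) (B : ℝ)
    (hc : ∀ i, ‖c i‖ ≤ B * (‖G i i‖ * s i)) :
    ∃ α, G *ᵥ α = c ∧ ∀ l, ‖α l‖ ≤ 2 * B * s l := by
  have hunit : IsUnit G := by
    rw [← mulVec_injective_iff_isUnit]
    intro α β h
    funext l
    have h0 : ∀ i, ‖(G *ᵥ (α - β)) i‖ ≤ 0 * (‖G i i‖ * s i) := by simp [mulVec_sub, h]
    simpa [sub_eq_zero] using norm_le_of_diag_dominant hs hdiag hdom h0 l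
  obtain ⟨α, hα⟩ := mulVec_surjective_iff_isUnit.mpr hunit c
  exact ⟨α, hα, norm_le_of_diag_dominant hs hdiag hdom (by rw [hα]; exact hc)⟩

end Matrix

namespace BackwardChain

/- In `exists_coeffs` the `l`-th unknown is the coefficient of `Y (depth q l + l)`, measured in
units of `scale q n l`; consecutive depths differ by the factor `8 q²` so that in these units the
system has off-diagonal entries at most `1 / (2 q)` (`choose_mul_scale_le`). -/
def depth (q l : ℕ) : ℕ := (8 * q ^ 2) ^ (l + 1)

def weight (q l : ℕ) : ℕ := ∏ t ∈ range l, 4 * q * depth q t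

theorem le_depth (q l : ℕ) : q ≤ depth q l := by
  rcases Nat.eq_zero_or_pos q with rfl | hq
  · exact Nat.zero_le _
  calc q ≤ 8 * q ^ 2 := by nlinarith
    _ ≤ depth q l := Nat.le_self_pow (by omega) _

theorem depth_mono {q : ℕ} (hq : 1 ≤ q) : Monotone (depth q) := fun _ _ h =>
  Nat.pow_le_pow_right (by nlinarith) (by omega)

theorem weight_pos {q : ℕ} (hq : 1 ≤ q) (l : ℕ) : 0 < weight q l :=
  prod_pos fun t _ => Nat.mul_pos (by omega) (by have := le_depth q t; omega)

theorem weight_eq_mul_prod {q j l : ℕ} (h : j ≤ l) :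
    weight q l = weight q j * ∏ t ∈ Ico j l, 4 * q * depth q t :=
  (prod_range_mul_prod_Ico _ h).symm

theorem entry_le_of_lt {q j l : ℕ} (hq : 1 ≤ q) (hjl : j < l) (n : ℕ) :
    2 * q * (n ^ j * n.choose (depth q l + l - j) * weight q l) ≤
      n ^ l * n.choose (depth q l) * weight q j := by
  obtain ⟨p, rfl⟩ : ∃ p, l = j + p := ⟨l - j, by omega⟩
  have hp : p ≠ 0 := by omega
  have hprod : 2 * q * ∏ t ∈ Ico j (j + p), 4 * q * depth q t ≤ (depth q (j + p) + 1) ^ p := by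
    calc 2 * q * ∏ t ∈ Ico j (j + p), 4 * q * depth q t
        ≤ (2 * q) ^ p * (4 * q * depth q (j + p - 1)) ^ p := by
          refine Nat.mul_le_mul (Nat.le_self_pow hp _) ?_
          have := prod_le_pow_card (Ico j (j + p)) (fun t => 4 * q * depth q t) _ fun t ht =>
            Nat.mul_le_mul_left _ (depth_mono hq (by simp at ht; omega : t ≤ j + p - 1))
          rwa [Nat.card_Ico, Nat.add_sub_cancel_left] at this
      _ = depth q (j + p) ^ p := by
          rw [← mul_pow, depth, depth, show j + p - 1 + 1 = j + p by omega,
            pow_succ' (8 * q ^ 2) (j + p)]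
          ring
      _ ≤ (depth q (j + p) + 1) ^ p := Nat.pow_le_pow_left (by omega) _
  calc 2 * q * (n ^ j * n.choose (depth q (j + p) + (j + p) - j) * weight q (j + p))
      = n ^ j * weight q j * (n.choose (depth q (j + p) + p) *
          (2 * q * ∏ t ∈ Ico j (j + p), 4 * q * depth q t)) := by
        rw [weight_eq_mul_prod (by omega : j ≤ j + p), show depth q (j + p) + (j + p) - j =
          depth q (j + p) + p by omega]; ring
    _ ≤ n ^ j * weight q j * (n.choose (depth q (j + p)) * n ^ p) :=
        Nat.mul_le_mul_left _
          ((Nat.mul_le_mul_left _ hprod).trans (Nat.choose_add_mul_pow_le ..))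
    _ = n ^ (j + p) * n.choose (depth q (j + p)) * weight q j := by ring

theorem entry_le_of_gt {q j l n : ℕ} (hq : 1 ≤ q) (hlj : l < j) (hj : j - l ≤ depth q l)
    (hn : 2 * depth q l ≤ n) :
    2 * q * (n ^ j * n.choose (depth q l + l - j) * weight q l) ≤
      n ^ l * n.choose (depth q l) * weight q j := by
  obtain ⟨p, rfl⟩ : ∃ p, j = l + p := ⟨j - l, by omega⟩
  have hp : p ≠ 0 := by omega
  have hprod : 2 * q * (2 * depth q l) ^ p ≤ ∏ t ∈ Ico l (l + p), 4 * q * depth q t := by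
    calc 2 * q * (2 * depth q l) ^ p ≤ (2 * q) ^ p * (2 * depth q l) ^ p :=
          Nat.mul_le_mul_right _ (Nat.le_self_pow hp _)
      _ = (4 * q * depth q l) ^ p := by rw [← mul_pow]; ring
      _ ≤ ∏ t ∈ Ico l (l + p), 4 * q * depth q t := by
          have := pow_card_le_prod (Ico l (l + p)) (fun t => 4 * q * depth q t) _ fun t ht =>
            Nat.mul_le_mul_left _ (depth_mono hq (by simp at ht; omega : l ≤ t))
          rwa [Nat.card_Ico, Nat.add_sub_cancel_left] at this
  calc 2 * q * (n ^ (l + p) * n.choose (depth q l + l - (l + p)) * weight q l)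
      = n ^ l * weight q l * (2 * q * (n.choose (depth q l - p) * n ^ p)) := by
        rw [show depth q l + l - (l + p) = depth q l - p by omega]; ring
    _ ≤ n ^ l * weight q l * (2 * q * (n.choose (depth q l) * (2 * depth q l) ^ p)) :=
        Nat.mul_le_mul_left _ (Nat.mul_le_mul_left _ (Nat.choose_sub_mul_pow_le (by omega) hn))
    _ = n ^ l * weight q l * (n.choose (depth q l) * (2 * q * (2 * depth q l) ^ p)) := by ring
    _ ≤ n ^ l * weight q l * (n.choose (depth q l) * ∏ t ∈ Ico l (l + p), 4 * q * depth q t) :=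
        Nat.mul_le_mul_left _ (Nat.mul_le_mul_left _ hprod)
    _ = n ^ l * n.choose (depth q l) * weight q (l + p) := by
        rw [weight_eq_mul_prod (by omega : l ≤ l + p)]; ring

theorem entry_le {q j l n : ℕ} (hj : j < q) (hl : l < q) (hjl : j ≠ l)
    (hn : 2 * depth q q ≤ n) :
    2 * q * (n ^ j * n.choose (depth q l + l - j) * weight q l) ≤
      n ^ l * n.choose (depth q l) * weight q j := by
  rcases lt_or_gt_of_ne hjl with h | h
  · exact entry_le_of_lt (by omega) h n
  · have := le_depth q l
    exact entry_le_of_gt (by omega) h (by omega)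
      ((Nat.mul_le_mul_left 2 (depth_mono (by omega) hl.le)).trans hn)

theorem tail_entry_le {n d l q j : ℕ} (hlq : l < q) (hqj : q ≤ j) (hj : j ≤ d + l)
    (hn : 2 * d ≤ n) :
    n ^ q * n.choose (d + l - j) ≤ (2 * d) ^ (d + l) * (n ^ l * n.choose d) := by
  obtain ⟨p, rfl⟩ : ∃ p, j = l + p := ⟨j - l, by omega⟩
  rcases Nat.eq_zero_or_pos n with rfl | hn0
  · simp [Nat.pos_iff_ne_zero.mp (by omega : 0 < q)]
  calc n ^ q * n.choose (d + l - (l + p))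
      ≤ n ^ l * (n.choose (d - p) * n ^ p) := by
        rw [show d + l - (l + p) = d - p by omega, mul_comm (n.choose _), ← mul_assoc,
          ← pow_add]
        exact Nat.mul_le_mul_right _ (Nat.pow_le_pow_right hn0 (by omega))
    _ ≤ n ^ l * (n.choose d * (2 * d) ^ p) :=
        Nat.mul_le_mul_left _ (Nat.choose_sub_mul_pow_le (by omega) hn)
    _ ≤ n ^ l * (n.choose d * (2 * d) ^ (d + l)) :=
        Nat.mul_le_mul_left _ (Nat.mul_le_mul_left _ (Nat.pow_le_pow_right (by omega) (by omega)))
    _ = _ := by ring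

noncomputable def scale (q n l : ℕ) : ℝ := weight q l / (n ^ l * n.choose (depth q l))

section scale

variable {q n : ℕ} (hn : 2 * depth q q ≤ n)
include hn

theorem choose_depth_pos {l : ℕ} (hl : l < q) : 0 < (n.choose (depth q l) : ℝ) :=
  Nat.cast_pos.mpr (Nat.choose_pos
    (by have := depth_mono (q := q) (by omega) hl.le; omega))

theorem pos_of_two_mul_depth_le {l : ℕ} (hl : l < q) : 0 < n := by
  have := le_depth q q; omega

theorem scale_pos {l : ℕ} (hl : l < q) : 0 < scale q n l := by
  have := choose_depth_pos hn hl
  have := pos_of_two_mul_depth_le hn hl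
  have : 0 < (weight q l : ℝ) := Nat.cast_pos.mpr (weight_pos (by omega) l)
  unfold scale; positivity

theorem choose_mul_scale_le {j l : ℕ} (hj : j < q) (hl : l < q) (hjl : j ≠ l) :
    n.choose (depth q l + l - j) * scale q n l ≤ weight q j / n ^ j / (2 * q) := by
  have hreal : 2 * q * ((n : ℝ) ^ j * n.choose (depth q l + l - j) * weight q l) ≤
      (n : ℝ) ^ l * n.choose (depth q l) * weight q j := by
    exact_mod_cast entry_le hj hl hjl hn
  have := choose_depth_pos hn hl
  have := pos_of_two_mul_depth_le hn hl
  have : 0 < q := by omega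
  rw [scale, mul_div_assoc', div_div, div_le_div_iff₀ (by positivity) (by positivity)]
  linarith

theorem pow_mul_scale_mul_choose_le {j l : ℕ} (hl : l < q) (hqj : q ≤ j)
    (hj : j ≤ depth q l + l) :
    n ^ q * scale q n l * n.choose (depth q l + l - j) ≤
      weight q l * (2 * depth q l) ^ (depth q l + l) := by
  have hreal : (n : ℝ) ^ q * n.choose (depth q l + l - j) ≤
      (2 * depth q l : ℝ) ^ (depth q l + l) * (n ^ l * n.choose (depth q l)) := by
    exact_mod_cast tail_entry_le hl hqj hj
      ((Nat.mul_le_mul_left 2 (depth_mono (by omega) hl.le)).trans hn)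
  have := choose_depth_pos hn hl
  have := pos_of_two_mul_depth_le hn hl
  rw [scale, mul_div_assoc', div_mul_eq_mul_div, div_le_iff₀ (by positivity)]
  calc (n : ℝ) ^ q * weight q l * n.choose (depth q l + l - j)
      = weight q l * (n ^ q * n.choose (depth q l + l - j)) := by ring
    _ ≤ _ := by rw [mul_assoc]; gcongr

theorem sum_choose_mul_scale_le (j : Fin q) :
    ∑ l ∈ univ.erase j, (n.choose (depth q l + l - j) : ℝ) * scale q n l ≤
      weight q j / n ^ (j : ℕ) / 2 := by
  have hq : (0 : ℝ) < q := by exact_mod_cast j.pos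
  have hq' : (((q - 1 : ℕ)) : ℝ) ≤ q := by exact_mod_cast Nat.sub_le q 1
  have := pos_of_two_mul_depth_le hn j.isLt
  calc ∑ l ∈ univ.erase j, (n.choose (depth q l + l - j) : ℝ) * scale q n l
      ≤ ∑ l ∈ univ.erase j, (weight q j : ℝ) / n ^ (j : ℕ) / (2 * q) :=
        sum_le_sum fun l hl =>
          choose_mul_scale_le hn j.isLt l.isLt (Fin.val_ne_of_ne (ne_of_mem_erase hl).symm)
    _ ≤ q * ((weight q j : ℝ) / n ^ (j : ℕ) / (2 * q)) := by
        rw [sum_const, card_erase_of_mem (mem_univ _), card_univ, Fintype.card_fin,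
          nsmul_eq_mul]
        gcongr
    _ = weight q j / n ^ (j : ℕ) / 2 := by field_simp

end scale

theorem exists_coeffs {lam : ℂ} (hlam : ‖lam‖ = 1) {q n : ℕ} (hn : 2 * depth q q ≤ n)
    (c : Fin q → ℂ) (hc : ∀ j, ‖c j‖ * n ^ ((j : ℕ) + 1) ≤ n ^ q) :
    ∃ α : Fin q → ℂ,
      (∀ j : Fin q, ∑ l : Fin q, ((n.choose (depth q l + l - j) : ℂ) *
          lam ^ (n - (depth q l + l - j))) * α l = c j) ∧
      ∀ (l : Fin q) (j : ℕ), q ≤ j → j ≤ depth q l + l →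
        ‖α l‖ * n.choose (depth q l + l - j) * n ≤
          2 * weight q l * (2 * depth q l) ^ (depth q l + l) := by
  rcases Nat.eq_zero_or_pos q with rfl | hq
  · exact ⟨0, fun j => j.elim0, fun l => l.elim0⟩
  have hn0 : 0 < n := pos_of_two_mul_depth_le hn hq
  let G : Matrix (Fin q) (Fin q) ℂ := fun j l =>
    (n.choose (depth q l + l - j) : ℂ) * lam ^ (n - (depth q l + l - j))
  have hG : ∀ j l, ‖G j l‖ = n.choose (depth q l + l - j) := fun j l => by simp [G, hlam]
  have hGs : ∀ j : Fin q, ‖G j j‖ * scale q n j = weight q j / n ^ (j : ℕ) := fun j => by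
    have := choose_depth_pos hn j.isLt
    rw [hG, Nat.add_sub_cancel, scale]; field_simp
  have hdom : ∀ j, ∑ l ∈ univ.erase j, ‖G j l‖ * scale q n l ≤ ‖G j j‖ * scale q n j / 2 :=
    fun j => by rw [hGs]; simpa only [hG] using sum_choose_mul_scale_le hn j
  have hdiag : ∀ j, G j j ≠ 0 := fun j => by
    rw [← norm_pos_iff, hG, Nat.add_sub_cancel]; exact choose_depth_pos hn j.isLt
  have hc' : ∀ j, ‖c j‖ ≤ (n : ℝ) ^ q / n * (‖G j j‖ * scale q n j) := fun j => by
    have : (1 : ℝ) ≤ weight q j := by exact_mod_cast weight_pos (by have := j.pos; omega) j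
    have := hc j
    rw [hGs, pow_succ] at *
    rw [div_mul_div_comm, le_div_iff₀ (by positivity)]
    nlinarith [pow_pos (Nat.cast_pos.mpr hn0 : (0 : ℝ) < n) q]
  obtain ⟨α, hα, hαs⟩ := Matrix.exists_mulVec_eq_of_diag_dominant
    (s := fun l : Fin q => scale q n l) (fun l => scale_pos hn l.isLt) hdiag hdom c _ hc'
  refine ⟨α, fun j => by simpa [Matrix.mulVec, dotProduct, G] using congrFun hα j,
    fun l j hqj hj => ?_⟩
  calc ‖α l‖ * n.choose (depth q l + l - j) * n
      ≤ 2 * ((n : ℝ) ^ q / n) * scale q n l * n.choose (depth q l + l - j) * n := by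
        gcongr; exact hαs l
    _ = 2 * (n ^ q * scale q n l * n.choose (depth q l + l - j)) := by field_simp
    _ ≤ 2 * weight q l * (2 * depth q l) ^ (depth q l + l) := by
        rw [mul_assoc 2 (weight q l : ℝ)]
        exact mul_le_mul_of_nonneg_left (pow_mul_scale_mul_choose_le hn l.isLt hqj hj) zero_le_two

end BackwardChain

section

variable {X : Type*} [NormedAddCommGroup X] [NormedSpace ℂ X]

def IsBackwardChain (S : X →L[ℂ] X) (Y : ℕ → X) : Prop :=
  S (Y 0) = 0 ∧ ∀ k, S (Y (k + 1)) = Y k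

namespace IsBackwardChain

variable {S : X →L[ℂ] X} {Y : ℕ → X}

theorem pow_apply (h : IsBackwardChain S Y) (i k : ℕ) :
    (S ^ i) (Y k) = if i ≤ k then Y (k - i) else 0 := by
  induction i generalizing k with
  | zero => simp
  | succ i ih =>
    rw [pow_succ, mul_apply_eq_comp]
    cases k with
    | zero => simp [h.1]
    | succ k =>
      rw [h.2, ih]
      split_ifs <;> first | rfl | omega | (congr 1; omega)

theorem smul_one_add_pow_apply (h : IsBackwardChain S Y) (lam : ℂ) (n k : ℕ) :
    ((lam • (1 : X →L[ℂ] X) + S) ^ n) (Y k) =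
      ∑ j ∈ range (k + 1), ((n.choose (k - j) : ℂ) * lam ^ (n - (k - j))) • Y j := by
  have hcomm : Commute S (lam • (1 : X →L[ℂ] X)) := (Commute.one_right S).smul_right lam
  have hterm : ∀ i, (S ^ i * (lam • (1 : X →L[ℂ] X)) ^ (n - i) * (n.choose i : X →L[ℂ] X)) (Y k)
      = if i ≤ k then ((n.choose i : ℂ) * lam ^ (n - i)) • Y (k - i) else 0 := by
    intro i
    simp only [mul_apply_eq_comp, smul_pow, one_pow, ContinuousLinearMap.natCast_apply,
      smul_apply, one_apply_eq_self, map_nsmul, map_smul, h.pow_apply]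
    split_ifs <;> simp [mul_smul, ← Nat.cast_smul_eq_nsmul ℂ]
  rw [add_comm, hcomm.add_pow, _root_.sum_apply,
    ← sum_range_reflect (fun j => ((n.choose (k - j) : ℂ) * lam ^ (n - (k - j))) • Y j)]
  simp only [hterm, ← sum_filter]
  refine sum_subset (fun i hi => by simp at hi ⊢; omega) (fun i hi hni => ?_) |>.trans
    (sum_congr rfl fun j hj => ?_)
  · simp only [mem_filter, mem_range, not_and, not_le] at hi hni
    have hin : n < i := by by_contra; exact absurd (hni (by omega)) (by omega)
    simp [Nat.choose_eq_zero_of_lt hin]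
  · simp only [mem_range] at hj
    rw [show k + 1 - 1 - j = k - j by omega, show k - (k - j) = j by omega]

theorem smul_one_add_pow_sum_sub {ι : Type*} [Fintype ι] (hY : IsBackwardChain S Y) (lam : ℂ)
    (n q : ℕ) (d : ι → ℕ) (hd : ∀ l, q ≤ d l + 1) (α : ι → ℂ) (c : ℕ → ℂ)
    (hc : ∀ j < q, ∑ l, ((n.choose (d l - j) : ℂ) * lam ^ (n - (d l - j))) * α l = c j) :
    ((lam • (1 : X →L[ℂ] X) + S) ^ n) (∑ l, α l • Y (d l)) - ∑ j ∈ range q, c j • Y j =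
      ∑ l, ∑ j ∈ Ico q (d l + 1),
        (α l * ((n.choose (d l - j) : ℂ) * lam ^ (n - (d l - j)))) • Y j := by
  simp only [map_sum, map_smul, hY.smul_one_add_pow_apply, ← sum_range_add_sum_Ico _ (hd _)]
  simp only [smul_add, smul_sum, smul_smul, sum_add_distrib]
  rw [sum_comm, add_sub_right_comm, add_eq_right, sub_eq_zero]
  refine sum_congr rfl fun j hj => ?_
  rw [← sum_smul, ← hc j (mem_range.mp hj)]
  simp only [mul_comm]

open BackwardChain in
theorem exists_approx_preimage (hY : IsBackwardChain S Y) {lam : ℂ} (hlam : ‖lam‖ = 1) (q : ℕ) :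
    ∃ C, ∀ᶠ n : ℕ in atTop, ∀ c : ℕ → ℂ, (∀ j < q, ‖c j‖ * n ^ (j + 1) ≤ n ^ q) →
      ∃ z, ‖z‖ * n ≤ C ∧
        ‖((lam • (1 : X →L[ℂ] X) + S) ^ n) z - ∑ j ∈ range q, c j • Y j‖ * n ≤ C := by
  let d : Fin q → ℕ := fun l => depth q l + l
  let K : Fin q → ℝ := fun l => 2 * weight q l * (2 * depth q l) ^ (depth q l + l)
  have hK : ∀ l, 0 ≤ K l := fun l => by positivity
  have hqd : ∀ l, q ≤ d l := fun l => (le_depth q l).trans (Nat.le_add_right _ _)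
  refine ⟨∑ l, K l * ∑ j ∈ Ico q (d l + 1), ‖Y j‖, ?_⟩
  filter_upwards [eventually_ge_atTop (2 * depth q q)] with n hn c hc
  obtain ⟨α, hα, hαK⟩ := exists_coeffs hlam hn (fun j => c j) (fun j => hc j j.isLt)
  refine ⟨∑ l, α l • Y (d l), ?_, ?_⟩
  · calc ‖∑ l, α l • Y (d l)‖ * n ≤ (∑ l, ‖α l • Y (d l)‖) * n := by
          gcongr; exact norm_sum_le _ _
      _ = ∑ l, ‖α l‖ * n * ‖Y (d l)‖ := by
          rw [sum_mul]; exact sum_congr rfl fun l _ => by rw [norm_smul]; ring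
      _ ≤ ∑ l, K l * ∑ j ∈ Ico q (d l + 1), ‖Y j‖ := by
          refine sum_le_sum fun l _ => mul_le_mul ?_ ?_ (norm_nonneg _) (hK l)
          · simpa [d, K] using hαK l (d l) (hqd l) le_rfl
          · exact single_le_sum (fun _ _ => norm_nonneg _) (by simp [hqd l])
  · rw [hY.smul_one_add_pow_sum_sub lam n q d (fun l => (hqd l).trans (Nat.le_succ _)) α c
      (fun j hj => hα ⟨j, hj⟩)]
    calc _ ≤ (∑ l, ∑ j ∈ Ico q (d l + 1), ‖(α l * ((n.choose (d l - j) : ℂ) *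
              lam ^ (n - (d l - j)))) • Y j‖) * n := by
          gcongr; exact (norm_sum_le _ _).trans (sum_le_sum fun l _ => norm_sum_le _ _)
      _ = ∑ l, ∑ j ∈ Ico q (d l + 1), ‖α l‖ * n.choose (d l - j) * n * ‖Y j‖ := by
          simp only [sum_mul]
          exact sum_congr rfl fun l _ => sum_congr rfl fun j _ => by simp [norm_smul, hlam]; ring
      _ ≤ ∑ l, K l * ∑ j ∈ Ico q (d l + 1), ‖Y j‖ := by
          simp only [mul_sum]
          gcongr with l _ j hj
          rw [mem_Ico] at hj
          exact hαK l j hj.1 (by simp only [d] at hj; omega)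

end IsBackwardChain

def ApproxReachable (T : X →L[ℂ] X) (u v : X) : Prop :=
  ∀ ε > 0, ∀ᶠ n : ℕ in atTop, ∃ z, ‖z‖ < ε ∧ ‖(T ^ n) (u + z) - v‖ < ε

namespace ApproxReachable

variable {T : X →L[ℂ] X}

theorem of_bound {u v : X} (C : ℝ)
    (h : ∀ᶠ n : ℕ in atTop, ∃ z, ‖z‖ * n ≤ C ∧ ‖(T ^ n) (u + z) - v‖ * n ≤ C) :
    ApproxReachable T u v := by
  intro ε hε
  filter_upwards [h, (tendsto_natCast_atTop_atTop (R := ℝ)).eventually_gt_atTop (C / ε)]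
    with n ⟨z, hz, hTz⟩ hn
  have hCn : C < ε * n := by rwa [div_lt_iff₀ hε, mul_comm] at hn
  exact ⟨z, lt_of_mul_lt_mul_right (hz.trans_lt hCn) n.cast_nonneg,
    lt_of_mul_lt_mul_right (hTz.trans_lt hCn) n.cast_nonneg⟩

variable (T) in
def submodule : Submodule ℂ (X × X) where
  carrier := {p | ApproxReachable T p.1 p.2}
  zero_mem' ε hε := Eventually.of_forall fun n => ⟨0, by simpa using hε⟩
  add_mem' {p p'} hp hp' ε hε := by
    filter_upwards [hp (ε / 2) (half_pos hε), hp' (ε / 2) (half_pos hε)]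
      with n ⟨z, hz, hTz⟩ ⟨z', hz', hTz'⟩
    refine ⟨z + z', (norm_add_le _ _).trans_lt (by linarith), ?_⟩
    calc ‖(T ^ n) (p.1 + p'.1 + (z + z')) - (p.2 + p'.2)‖
        = ‖((T ^ n) (p.1 + z) - p.2) + ((T ^ n) (p'.1 + z') - p'.2)‖ := by
          simp only [map_add]; congr 1; abel
      _ < ε := (norm_add_le _ _).trans_lt (by linarith)
  smul_mem' a p hp ε hε := by
    rcases eq_or_ne a 0 with rfl | ha
    · exact Eventually.of_forall fun n => ⟨0, by simpa using hε⟩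
    have ha' : 0 < ‖a‖ := norm_pos_iff.mpr ha
    filter_upwards [hp (ε / ‖a‖) (div_pos hε ha')] with n ⟨z, hz, hTz⟩
    refine ⟨a • z, ?_, ?_⟩
    · rw [norm_smul]; rwa [lt_div_iff₀ ha', mul_comm] at hz
    · rw [Prod.smul_fst, Prod.smul_snd, ← smul_add, map_smul, ← smul_sub, norm_smul]
      rwa [lt_div_iff₀ ha', mul_comm] at hTz

end ApproxReachable

theorem isMixingOp_of_approxReachable {T : X →L[ℂ] X} {D : Set X} (hD : Dense D)
    (h : ∀ u ∈ D, ∀ v ∈ D, ApproxReachable T u v) : IsMixingOp T := by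
  intro U V hU hV hUne hVne
  obtain ⟨u, huU, huD⟩ := hD.inter_open_nonempty U hU hUne
  obtain ⟨v, hvV, hvD⟩ := hD.inter_open_nonempty V hV hVne
  obtain ⟨εu, hεu, hbu⟩ := Metric.isOpen_iff.mp hU u huU
  obtain ⟨εv, hεv, hbv⟩ := Metric.isOpen_iff.mp hV v hvV
  obtain ⟨N, hN⟩ := eventually_atTop.mp (h u huD v hvD (min εu εv) (lt_min hεu hεv))
  refine ⟨N, fun n hn => ?_⟩
  obtain ⟨z, hz, hTz⟩ := hN n hn.le
  refine ⟨(T ^ n) (u + z), ⟨u + z, hbu ?_, rfl⟩, hbv ?_⟩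
  · rw [Metric.mem_ball, dist_eq_norm, add_sub_cancel_left]
    exact hz.trans_le (min_le_left _ _)
  · rw [Metric.mem_ball, dist_eq_norm]
    exact hTz.trans_le (min_le_right _ _)
namespace IsBackwardChain

variable {S : X →L[ℂ] X} {Y : ℕ → X}

theorem approxReachable_self_zero (hY : IsBackwardChain S Y) {lam : ℂ} (hlam : ‖lam‖ = 1)
    (i : ℕ) : ApproxReachable (lam • (1 : X →L[ℂ] X) + S) (Y i) 0 := by
  obtain ⟨C, hC⟩ := hY.exists_approx_preimage hlam (i + 1)
  refine ApproxReachable.of_bound C ?_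
  filter_upwards [hC] with n hn
  have hc : ∀ j < i + 1, ‖-((n.choose (i - j) : ℂ) * lam ^ (n - (i - j)))‖ * (n : ℝ) ^ (j + 1) ≤
      (n : ℝ) ^ (i + 1) := fun j hj => by
    have : (n.choose (i - j) : ℝ) ≤ (n : ℝ) ^ (i - j) := by exact_mod_cast Nat.choose_le_pow n _
    calc ‖-((n.choose (i - j) : ℂ) * lam ^ (n - (i - j)))‖ * (n : ℝ) ^ (j + 1)
        ≤ (n : ℝ) ^ (i - j) * (n : ℝ) ^ (j + 1) := by simp [hlam]; gcongr
      _ = (n : ℝ) ^ (i + 1) := by rw [← pow_add]; congr 1; omega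
  obtain ⟨z, hz, hTz⟩ := hn _ hc
  refine ⟨z, hz, ?_⟩
  simp only [neg_smul, sum_neg_distrib, sub_neg_eq_add] at hTz
  rwa [sub_zero, map_add, hY.smul_one_add_pow_apply, add_comm]

theorem approxReachable_zero_self (hY : IsBackwardChain S Y) {lam : ℂ} (hlam : ‖lam‖ = 1)
    (i : ℕ) : ApproxReachable (lam • (1 : X →L[ℂ] X) + S) 0 (Y i) := by
  obtain ⟨C, hC⟩ := hY.exists_approx_preimage hlam (i + 1)
  refine ApproxReachable.of_bound C ?_
  filter_upwards [hC] with n hn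
  obtain ⟨z, hz, hTz⟩ := hn (fun j => if j = i then 1 else 0) fun j hj => by
    split_ifs with h
    · subst h; simp
    · simp
  exact ⟨z, hz, by simpa [ite_smul] using hTz⟩

theorem approxReachable (hY : IsBackwardChain S Y) {lam : ℂ} (hlam : ‖lam‖ = 1) {u v : X}
    (hu : u ∈ Submodule.span ℂ (Set.range Y)) (hv : v ∈ Submodule.span ℂ (Set.range Y)) :
    ApproxReachable (lam • (1 : X →L[ℂ] X) + S) u v := by
  set P := ApproxReachable.submodule (lam • (1 : X →L[ℂ] X) + S)
  have hu' : (u, 0) ∈ P := (Submodule.span_le (p := P.comap (LinearMap.inl ℂ X X)) |>.mpr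
    (by rintro _ ⟨i, rfl⟩; exact hY.approxReachable_self_zero hlam i)) hu
  have hv' : (0, v) ∈ P := (Submodule.span_le (p := P.comap (LinearMap.inr ℂ X X)) |>.mpr
    (by rintro _ ⟨i, rfl⟩; exact hY.approxReachable_zero_self hlam i)) hv
  have huv := P.add_mem hu' hv'
  rw [Prod.mk_add_mk, add_zero, zero_add] at huv
  exact huv

end IsBackwardChain

def partialSpan (x : ℕ → X) (k : ℕ) : Submodule ℂ X := Submodule.span ℂ (x '' Set.Iic k)

variable {S : X →L[ℂ] X} {x : ℕ → X}

theorem mem_partialSpan {i k : ℕ} (h : i ≤ k) : x i ∈ partialSpan x k :=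
  Submodule.subset_span ⟨i, h, rfl⟩

theorem partialSpan_succ (k : ℕ) :
    partialSpan x (k + 1) = Submodule.span ℂ (insert (x (k + 1)) (x '' Set.Iic k)) := by
  have : Set.Iic (k + 1) = insert (k + 1) (Set.Iic k) := by
    ext i; simp only [Set.mem_Iic, Set.mem_insert_iff]; omega
  rw [partialSpan, this, Set.image_insert_eq]

theorem partialSpan_zero : partialSpan x 0 = Submodule.span ℂ {x 0} := by
  have : Set.Iic 0 = {0} := by ext; simp
  rw [partialSpan, this, Set.image_singleton]

namespace IsGenBackwardOneShift

theorem partialSpan_succ_le_comap (hS : IsGenBackwardOneShift S x) (k : ℕ) :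
    partialSpan x (k + 1) ≤ (partialSpan x k).comap S.toLinearMap := by
  refine Submodule.span_le.mpr ?_
  rintro _ ⟨i, hi, rfl⟩
  rcases i with _ | i
  · simp [hS.1]
  obtain ⟨c, hc, -⟩ := hS.2 (i + 1) (by omega)
  simp only [Set.mem_Iic] at hi
  rw [SetLike.mem_coe, Submodule.mem_comap, ContinuousLinearMap.coe_coe, hc]
  exact sum_mem fun j hj => Submodule.smul_mem _ _ (mem_partialSpan (by simp at hj; omega))

theorem pow_apply_eq_zero (hS : IsGenBackwardOneShift S x) (k : ℕ) :
    ∀ v ∈ partialSpan x k, (S ^ (k + 1)) v = 0 := by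
  induction k with
  | zero =>
    intro v hv
    rw [partialSpan_zero, Submodule.mem_span_singleton] at hv
    obtain ⟨a, rfl⟩ := hv
    simp [hS.1]
  | succ k ih =>
    intro v hv
    rw [pow_succ, mul_apply_eq_comp]
    exact ih _ (hS.partialSpan_succ_le_comap k hv)

theorem partialSpan_le_map (hS : IsGenBackwardOneShift S x) (k : ℕ) :
    partialSpan x k ≤ (partialSpan x (k + 1)).map S.toLinearMap := by
  refine Submodule.span_le.mpr ?_
  rintro _ ⟨i, hi, rfl⟩
  induction i using Nat.strong_induction_on with
  | _ i ih =>
    simp only [Set.mem_Iic] at hi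
    obtain ⟨c, hc, hci⟩ := hS.2 (i + 1) (by omega)
    rw [Nat.add_sub_cancel] at hci
    have hxi : x i = (c i)⁻¹ • (S (x (i + 1)) - ∑ j ∈ range i, c j • x j) := by
      rw [hc, sum_range_succ, add_sub_cancel_left, smul_smul, inv_mul_cancel₀ hci, one_smul]
    rw [hxi]
    refine Submodule.smul_mem _ _ (Submodule.sub_mem _ ⟨x (i + 1), mem_partialSpan (by omega),
      rfl⟩ (sum_mem fun j hj => Submodule.smul_mem _ _ (ih j (by simpa using hj) ?_)))
    simp only [mem_range] at hj
    simp only [Set.mem_Iic]; omega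

theorem exists_isBackwardChain_mem (hS : IsGenBackwardOneShift S x) :
    ∃ Y, IsBackwardChain S Y ∧ Y 0 = x 0 ∧ ∀ k, Y k ∈ partialSpan x k := by
  have hL : ∀ k v, ∃ w, v ∈ partialSpan x k → w ∈ partialSpan x (k + 1) ∧ S w = v := by
    intro k v
    by_cases hv : v ∈ partialSpan x k
    · obtain ⟨w, hw, hSw⟩ := hS.partialSpan_le_map k hv
      exact ⟨w, fun _ => ⟨hw, hSw⟩⟩
    · exact ⟨0, fun h => absurd h hv⟩
  choose L hL using hL
  let Y : ℕ → X := fun k => Nat.rec (x 0) (fun k y => L k y) k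
  have hYV : ∀ k, Y k ∈ partialSpan x k := by
    intro k
    induction k with
    | zero => exact mem_partialSpan le_rfl
    | succ k ih => exact (hL k (Y k) ih).1
  exact ⟨Y, ⟨hS.1, fun k => (hL k (Y k) (hYV k)).2⟩, rfl, hYV⟩

theorem exists_isBackwardChain (hS : IsGenBackwardOneShift S x) (hx0 : x 0 ≠ 0) :
    ∃ Y, IsBackwardChain S Y ∧
      Submodule.span ℂ (Set.range x) ≤ Submodule.span ℂ (Set.range Y) := by
  obtain ⟨Y, hY, hY0, hYV⟩ := hS.exists_isBackwardChain_mem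
  refine ⟨Y, hY, Submodule.span_le.mpr ?_⟩
  rintro _ ⟨k, rfl⟩
  suffices partialSpan x k ≤ Submodule.span ℂ (Set.range Y) from this (mem_partialSpan le_rfl)
  induction k with
  | zero =>
    rw [partialSpan_zero, Submodule.span_singleton_le_iff_mem, ← hY0]
    exact Submodule.subset_span ⟨0, rfl⟩
  | succ k ih =>
    rw [partialSpan_succ, Submodule.span_le, Set.insert_subset_iff]
    refine ⟨?_, Submodule.span_le.mp ih⟩
    have hYk := hYV (k + 1)
    rw [partialSpan_succ] at hYk
    obtain ⟨a, w, hw, hYw⟩ := Submodule.mem_span_insert.mp hYk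
    -- `a ≠ 0`, for otherwise `S ^ (k + 1)` would kill `Y (k + 1)`, whose image is `Y 0 = x 0`.
    have ha : a ≠ 0 := by
      rintro rfl
      rw [zero_smul, zero_add] at hYw
      have h0 := hS.pow_apply_eq_zero k _ (hYw ▸ hw)
      rw [hY.pow_apply, if_pos le_rfl, Nat.sub_self, hY0] at h0
      exact hx0 h0
    have hxk : x (k + 1) = a⁻¹ • (Y (k + 1) - w) := by
      rw [hYw, add_sub_cancel_right, smul_smul, inv_mul_cancel₀ ha, one_smul]
    rw [hxk]
    exact Submodule.smul_mem _ _
      (Submodule.sub_mem _ (Submodule.subset_span ⟨k + 1, rfl⟩) (ih hw))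

end IsGenBackwardOneShift

end

theorem stmt5_general {X : Type*} [NormedAddCommGroup X] [NormedSpace ℂ X]
    (S : X →L[ℂ] X) (x : ℕ → X) (hli : LinearIndependent ℂ x)
    (hdense : Dense (Submodule.span ℂ (Set.range x) : Set X))
    (hshift : IsGenBackwardOneShift S x)
    (lam : ℂ) (hlam : ‖lam‖ = 1) :
    IsMixingOp (lam • (1 : X →L[ℂ] X) + S) := by
  obtain ⟨Y, hY, hxY⟩ := hshift.exists_isBackwardChain (hli.ne_zero 0)
  exact isMixingOp_of_approxReachable (hdense.mono hxY) fun u hu v hv =>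
    hY.approxReachable hlam hu hv

theorem stmt5 {X : Type*} [NormedAddCommGroup X] [NormedSpace ℂ X] [CompleteSpace X]
    [TopologicalSpace.SeparableSpace X] (hinf : ¬ FiniteDimensional ℂ X)
    (S : X →L[ℂ] X) (x : ℕ → X) (hli : LinearIndependent ℂ x)
    (hdense : Dense (Submodule.span ℂ (Set.range x) : Set X))
    (hshift : IsGenBackwardOneShift S x)
    (lam : ℂ) (hlam : ‖lam‖ = 1) :
    IsMixingOp (lam • (1 : X →L[ℂ] X) + S) :=
  stmt5_general S x hli hdense hshift lam hlam
end

section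
/- Let X be a separable infinite-dimensional complex Banach space, let S be a bounded linear operator on X that is a generalised backward ∞-shift adapted to a family of linearly independent vectors {x^ℓ_k : ℓ ≥ 1, k ≥ 1} with dense linear span, and let λ ∈ ℂ with |λ| = 1. Then λI + S is mixing. -/
open Filter Topology Polynomial PowerSeries.WithPiTopology

theorem Filter.Tendsto.matrix_mulVec {ι m n R : Type*} [Fintype n] [TopologicalSpace R]
    [NonUnitalNonAssocSemiring R] [ContinuousAdd R] [ContinuousMul R] {l : Filter ι}
    {A : ι → Matrix m n R} {v : ι → n → R} {A₀ : Matrix m n R} {v₀ : n → R}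
    (hA : Tendsto A l (𝓝 A₀)) (hv : Tendsto v l (𝓝 v₀)) :
    Tendsto (fun i => (A i).mulVec (v i)) l (𝓝 (A₀.mulVec v₀)) :=
  ((continuous_fst.matrix_mulVec continuous_snd).tendsto (A₀, v₀)).comp (hA.prodMk_nhds hv)

section Window

variable {R : Type*}

/-- The matrix of `P ↦ (coeff (h + s) (g * P))ₛ` on polynomials `P` of degree `< h`. -/
noncomputable def windowMatrix [Semiring R] (h : ℕ) (g : PowerSeries R) :
    Matrix (Fin h) (Fin h) R :=
  Matrix.of fun s j => PowerSeries.coeff (h + s - j) g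

theorem continuous_windowMatrix [Semiring R] [TopologicalSpace R] (h : ℕ) :
    Continuous (windowMatrix (R := R) h) :=
  continuous_matrix fun _ _ => continuous_coeff _ _

theorem coeff_degreeLTEquiv_symm [CommRing R] {h : ℕ} (z : Fin h → R) (d : ℕ) :
    ((degreeLTEquiv R h).symm z : R[X]).coeff d = if hd : d < h then z ⟨d, hd⟩ else 0 := by
  split_ifs with hd
  · exact congrFun ((degreeLTEquiv R h).apply_symm_apply z) ⟨d, hd⟩
  · exact coeff_eq_zero_of_degree_lt <|
      (mem_degreeLT.1 ((degreeLTEquiv R h).symm z).2).trans_le (by exact_mod_cast not_lt.1 hd)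

theorem tendsto_coe_degreeLTEquiv_symm [CommRing R] [TopologicalSpace R] {ι : Type*}
    {l : Filter ι} {h : ℕ} {z : ι → Fin h → R} {z₀ : Fin h → R}
    (hz : Tendsto z l (𝓝 z₀)) :
    Tendsto (fun i => (((degreeLTEquiv R h).symm (z i) : R[X]) : PowerSeries R)) l
      (𝓝 ((degreeLTEquiv R h).symm z₀ : R[X])) := by
  rw [tendsto_iff_coeff_tendsto]
  intro d
  simp only [coeff_coe, coeff_degreeLTEquiv_symm]
  split_ifs
  · exact ((continuous_apply _).tendsto _).comp hz
  · exact tendsto_const_nhds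

theorem coeff_mul_degreeLTEquiv_symm [CommRing R] {h : ℕ} (f : R[X]) (z : Fin h → R)
    (s : Fin h) :
    (f * (degreeLTEquiv R h).symm z).coeff (h + s) =
      (windowMatrix h (f : PowerSeries R)).mulVec z s := by
  rw [mul_comm, coeff_mul, Finset.Nat.sum_antidiagonal_eq_sum_range_succ
    (fun i j => ((degreeLTEquiv R h).symm z : R[X]).coeff i * f.coeff j),
    ← Finset.sum_subset (Finset.range_subset_range.2 (by omega : h ≤ h + s + 1)),
    ← Fin.sum_univ_eq_sum_range]
  · refine Finset.sum_congr rfl fun j _ => ?_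
    rw [coeff_degreeLTEquiv_symm, dif_pos j.2, mul_comm]
    simp only [windowMatrix, Matrix.of_apply, coeff_coe]
  · intro j _ hj
    rw [coeff_degreeLTEquiv_symm, dif_neg (by simpa using hj), zero_mul]

end Window

theorem det_windowMatrix_exp_ne_zero {K : Type*} [Field K] [CharZero K] (h : ℕ) :
    (windowMatrix h (PowerSeries.exp K)).det ≠ 0 := by
  have hdiag : Matrix.diagonal (fun s : Fin h => ((h + s).factorial : K)) *
      windowMatrix h (PowerSeries.exp K) =
      Matrix.of fun s j : Fin h => (descPochhammer K j).eval ((h + s : ℕ) : K) := by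
    ext s j
    have hfac := Nat.factorial_mul_descFactorial (show (j : ℕ) ≤ h + s by omega)
    have : ((h + s - j).factorial : K) ≠ 0 := by exact_mod_cast Nat.factorial_ne_zero _
    simp only [Matrix.diagonal_mul, windowMatrix, Matrix.of_apply, PowerSeries.coeff_exp,
      descPochhammer_eval_eq_descFactorial, map_div₀, map_one, map_natCast]
    field_simp
    exact_mod_cast hfac.symm
  have hvdm := Matrix.det_eval_matrixOfPolynomials_eq_det_vandermonde
    (fun s : Fin h => ((h + s : ℕ) : K)) (fun j => descPochhammer K j)
    (fun j => descPochhammer_natDegree K j) (fun j => monic_descPochhammer K j)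
  refine right_ne_zero_of_mul
    (a := (Matrix.diagonal fun s : Fin h => ((h + s).factorial : K)).det) ?_
  rw [← Matrix.det_mul, hdiag, ← hvdm, Matrix.det_vandermonde_ne_zero_iff]
  intro a b hab
  exact Fin.ext (by simpa using hab)

theorem tendsto_one_add_inv_mul_X_pow :
    Tendsto (fun n : ℕ => (((1 + C (n : ℂ)⁻¹ * X) ^ n : ℂ[X]) : PowerSeries ℂ)) atTop
      (𝓝 (PowerSeries.exp ℂ)) := by
  rw [tendsto_iff_coeff_tendsto]
  intro k
  have hreal := ProbabilityTheory.tendsto_choose_mul_pow_atTop k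
    (p := fun n : ℕ => (n : ℝ)⁻¹) (r := 1) <| tendsto_const_nhds.congr' <|
      (eventually_ne_atTop 0).mono fun n hn => (mul_inv_cancel₀ (Nat.cast_ne_zero.2 hn)).symm
  have hcomp : ∀ (a : ℂ) (n : ℕ), (1 + C a * X) ^ n = ((1 + X) ^ n).comp (C a * X) := by
    simp
  simp only [coeff_coe, hcomp, comp_C_mul_X_coeff, coeff_one_add_X_pow, PowerSeries.coeff_exp]
  simpa [Function.comp_def] using (Complex.continuous_ofReal.tendsto _).comp hreal

theorem exists_degree_lt_coeff_mul_eq {h : ℕ} {f b : ℕ → ℂ[X]} {f₀ b₀ : PowerSeries ℂ}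
    (hf : Tendsto (fun n => (f n : PowerSeries ℂ)) atTop (𝓝 f₀))
    (hf₀ : (windowMatrix h f₀).det ≠ 0)
    (hb : Tendsto (fun n => (b n : PowerSeries ℂ)) atTop (𝓝 b₀)) :
    ∃ (P : ℕ → ℂ[X]) (P₀ : PowerSeries ℂ), (∀ n, (P n).degree < h) ∧
      Tendsto (fun n => (P n : PowerSeries ℂ)) atTop (𝓝 P₀) ∧
      ∀ᶠ n in atTop, ∀ d, h ≤ d → d < 2 * h → (f n * P n).coeff d = (b n).coeff d := by
  have hM : Tendsto (fun n => windowMatrix h (f n : PowerSeries ℂ)) atTop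
      (𝓝 (windowMatrix h f₀)) :=
    ((continuous_windowMatrix h).tendsto f₀).comp hf
  have hinv : ContinuousAt Ring.inverse (windowMatrix h f₀).det :=
    Ring.inverse_eq_inv' (G₀ := ℂ) ▸ continuousAt_inv₀ hf₀
  have hMinv : Tendsto (fun n => (windowMatrix h (f n : PowerSeries ℂ))⁻¹) atTop
      (𝓝 (windowMatrix h f₀)⁻¹) :=
    (continuousAt_matrix_inv _ hinv).tendsto.comp hM
  have hb' : Tendsto (fun n (s : Fin h) => (b n).coeff (h + s)) atTop
      (𝓝 fun s => PowerSeries.coeff (h + s) b₀) :=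
    tendsto_pi_nhds.2 fun s => by
      simpa only [coeff_coe, Function.comp_def] using
        ((continuous_coeff ℂ (h + s)).tendsto b₀).comp hb
  refine ⟨fun n => (degreeLTEquiv ℂ h).symm
      ((windowMatrix h (f n : PowerSeries ℂ))⁻¹.mulVec fun s => (b n).coeff (h + s)), _,
    fun n => mem_degreeLT.1 ((degreeLTEquiv ℂ h).symm _).2,
    tendsto_coe_degreeLTEquiv_symm (hMinv.matrix_mulVec hb'), ?_⟩
  have hdet : ∀ᶠ n in atTop, (windowMatrix h (f n : PowerSeries ℂ)).det ≠ 0 :=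
    (((continuous_id.matrix_det).tendsto _).comp hM).eventually_ne hf₀
  filter_upwards [hdet] with n hn d hhd hd2h
  obtain ⟨s, rfl⟩ : ∃ s : Fin h, h + s = d := ⟨⟨d - h, by omega⟩, by simp; omega⟩
  rw [coeff_mul_degreeLTEquiv_symm, Matrix.mulVec_mulVec,
    Matrix.mul_nonsing_inv _ (isUnit_iff_ne_zero.2 hn), Matrix.one_mulVec]

theorem coeff_X_add_C_pow_mul_C_mul_comp {μ κ : ℂ} {n : ℕ} (hμ : μ ≠ 0) (hn : n ≠ 0)
    (F : ℂ[X]) (d : ℕ) :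
    ((X + C μ) ^ n * (C κ * F.comp (C (n / μ) * X))).coeff d =
      κ * μ ^ n * (n / μ) ^ d * ((1 + C (n : ℂ)⁻¹ * X) ^ n * F).coeff d := by
  have hn' : (n : ℂ) ≠ 0 := Nat.cast_ne_zero.2 hn
  have hsub :
      (X + C μ) ^ n = C (μ ^ n) * ((1 + C (n : ℂ)⁻¹ * X) ^ n).comp (C (n / μ) * X) := by
    rw [pow_comp, C_pow, ← mul_pow]
    congr 1
    simp only [add_comp, one_comp, mul_comp, C_comp, X_comp, mul_add, mul_one, ← mul_assoc,
      ← C_mul]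
    rw [show μ * (n : ℂ)⁻¹ * (n / μ) = 1 by field_simp, C_1, one_mul, add_comm]
  rw [hsub, show ∀ A B : ℂ[X], C (μ ^ n) * A * (C κ * B) = C (κ * μ ^ n) * (A * B) by
    intro A B; rw [C_mul]; ring, ← mul_comp, coeff_C_mul, comp_C_mul_X_coeff]
  ring

theorem tendsto_div_pow_mul_pow_mul_coeff {μ : ℂ} (hμ : μ ≠ 0) {h d : ℕ} (hd : d < 2 * h)
    {G : ℕ → ℂ[X]} {G₀ : PowerSeries ℂ}
    (hG : Tendsto (fun n => (G n : PowerSeries ℂ)) atTop (𝓝 G₀)) {c : ℂ}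
    (hwin : ∀ᶠ n in atTop, ∀ k, h ≤ k → k < 2 * h →
      (G n).coeff k = (C c * X ^ h).coeff k) :
    Tendsto (fun n : ℕ => (μ / n) ^ h * (n / μ) ^ d * (G n).coeff d) atTop
      (𝓝 ((C c * X ^ h).coeff d)) := by
  rcases lt_or_ge d h with hdh | hhd
  · have hfac : ∀ᶠ n : ℕ in atTop, (μ / n) ^ (h - d) = (μ / n) ^ h * (n / μ) ^ d := by
      filter_upwards [eventually_ne_atTop 0] with n hn
      have hn' : (n : ℂ) ≠ 0 := Nat.cast_ne_zero.2 hn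
      rw [← Nat.sub_add_cancel hdh.le, pow_add, mul_assoc, ← mul_pow,
        show (μ / n) * (n / μ) = 1 by field_simp, one_pow, mul_one, Nat.add_sub_cancel]
    have hsmall : Tendsto (fun n : ℕ => (μ / n) ^ (h - d)) atTop (𝓝 0) := by
      simpa [zero_pow (Nat.sub_ne_zero_of_lt hdh)] using
        (tendsto_const_div_atTop_nhds_zero_nat μ).pow (h - d)
    have hcoeff : Tendsto (fun n => (G n).coeff d) atTop (𝓝 (PowerSeries.coeff d G₀)) := by
      simpa only [coeff_coe, Function.comp_def] using ((continuous_coeff ℂ d).tendsto _).comp hG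
    rw [coeff_C_mul_X_pow, if_neg hdh.ne]
    simpa using (hsmall.congr' hfac).mul hcoeff
  · refine tendsto_const_nhds.congr' ?_
    filter_upwards [hwin, eventually_ne_atTop 0] with n hn hn0
    have hn' : (n : ℂ) ≠ 0 := Nat.cast_ne_zero.2 hn0
    rw [hn d hhd hd, coeff_C_mul_X_pow]
    split_ifs with hdh
    · rw [hdh, ← mul_pow, show (μ / n) * (n / μ) = 1 by field_simp, one_pow, one_mul]
    · rw [mul_zero]

theorem exists_tendsto_coeff_X_pow_of_pow_mul_tendsto_zero {μ : ℂ} (hμ : ‖μ‖ = 1)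
    (h : ℕ) :
    ∃ p : ℕ → ℂ[X], ∀ d < 2 * h,
      Tendsto (fun n => (p n).coeff d) atTop (𝓝 ((X ^ h : ℂ[X]).coeff d)) ∧
      Tendsto (fun n => ((X + C μ) ^ n * p n).coeff d) atTop (𝓝 0) := by
  have hμ0 : μ ≠ 0 := norm_ne_zero_iff.1 (by rw [hμ]; exact one_ne_zero)
  set E : ℕ → ℂ[X] := fun n => (1 + C (n : ℂ)⁻¹ * X) ^ n
  obtain ⟨P, P₀, hPdeg, hP, hwin⟩ := exists_degree_lt_coeff_mul_eq (h := h)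
    tendsto_one_add_inv_mul_X_pow (det_windowMatrix_exp_ne_zero h)
    (b := fun n => -(E n * X ^ h)) (by
      push_cast
      exact (tendsto_one_add_inv_mul_X_pow.mul_const _).neg)
  have hcoeffP : ∀ n d, h ≤ d → (P n).coeff d = 0 := fun n d hd =>
    coeff_eq_zero_of_degree_lt ((hPdeg n).trans_le (by exact_mod_cast hd))
  refine ⟨fun n => C ((μ / n) ^ h) * (X ^ h + P n).comp (C (n / μ) * X),
    fun d hd => ⟨?_, ?_⟩⟩
  · have := tendsto_div_pow_mul_pow_mul_coeff hμ0 hd (c := 1) (G := fun n => X ^ h + P n)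
      (G₀ := PowerSeries.X ^ h + P₀) (by push_cast; exact tendsto_const_nhds.add hP)
      (Eventually.of_forall fun n k hk _ => by
        rw [coeff_add, hcoeffP n k hk, add_zero, C_1, one_mul])
    rw [C_1, one_mul] at this
    refine this.congr fun n => ?_
    rw [coeff_C_mul, comp_C_mul_X_coeff]
    ring
  · have := tendsto_div_pow_mul_pow_mul_coeff hμ0 hd (c := 0)
      (G := fun n => E n * (X ^ h + P n)) (G₀ := PowerSeries.exp ℂ * (PowerSeries.X ^ h + P₀))
      (by push_cast; exact tendsto_one_add_inv_mul_X_pow.mul (tendsto_const_nhds.add hP))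
      (hwin.mono fun n hn k hk hk2 => by
        rw [mul_add, coeff_add, hn k hk hk2, coeff_neg, add_neg_cancel, C_0, zero_mul,
          coeff_zero])
    rw [C_0, zero_mul, coeff_zero] at this
    have hbdd : IsBoundedUnder (· ≤ ·) atTop fun n : ℕ => ‖μ ^ n‖ :=
      isBoundedUnder_of_eventually_le (a := 1) (Eventually.of_forall fun n => by simp [hμ])
    refine (isBoundedUnder_le_mul_tendsto_zero hbdd this).congr' ?_
    filter_upwards [eventually_ne_atTop 0] with n hn
    rw [coeff_X_add_C_pow_mul_C_mul_comp hμ0 hn]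
    ring

theorem exists_tendsto_coeff_zero_of_pow_mul_tendsto_X_pow {μ : ℂ} (hμ : ‖μ‖ = 1)
    (h : ℕ) :
    ∃ q : ℕ → ℂ[X], ∀ d < 2 * h,
      Tendsto (fun n => (q n).coeff d) atTop (𝓝 0) ∧
      Tendsto (fun n => ((X + C μ) ^ n * q n).coeff d) atTop
        (𝓝 ((X ^ h : ℂ[X]).coeff d)) := by
  have hμ0 : μ ≠ 0 := norm_ne_zero_iff.1 (by rw [hμ]; exact one_ne_zero)
  obtain ⟨Q, Q₀, hQdeg, hQ, hwin⟩ := exists_degree_lt_coeff_mul_eq (h := h)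
    tendsto_one_add_inv_mul_X_pow (det_windowMatrix_exp_ne_zero h)
    (b := fun _ => X ^ h) tendsto_const_nhds
  refine ⟨fun n => C ((μ ^ n)⁻¹ * (μ / n) ^ h) * (Q n).comp (C (n / μ) * X),
    fun d hd => ⟨?_, ?_⟩⟩
  · have := tendsto_div_pow_mul_pow_mul_coeff hμ0 hd (c := 0) hQ
      (Eventually.of_forall fun n k hk _ => by
        rw [C_0, zero_mul, coeff_zero]
        exact coeff_eq_zero_of_degree_lt ((hQdeg n).trans_le (by exact_mod_cast hk)))
    rw [C_0, zero_mul, coeff_zero] at this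
    have hbdd : IsBoundedUnder (· ≤ ·) atTop fun n : ℕ => ‖(μ ^ n)⁻¹‖ :=
      isBoundedUnder_of_eventually_le (a := 1) (Eventually.of_forall fun n => by simp [hμ])
    refine (isBoundedUnder_le_mul_tendsto_zero hbdd this).congr fun n => ?_
    rw [coeff_C_mul, comp_C_mul_X_coeff]
    ring
  · have := tendsto_div_pow_mul_pow_mul_coeff hμ0 hd (c := 1)
      (G := fun n => (1 + C (n : ℂ)⁻¹ * X) ^ n * Q n) (G₀ := PowerSeries.exp ℂ * Q₀)
      (by simpa only [coe_mul] using tendsto_one_add_inv_mul_X_pow.mul hQ)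
      (hwin.mono fun n hn k hk hk2 => by rw [hn k hk hk2, C_1, one_mul])
    rw [C_1, one_mul] at this
    refine this.congr' ?_
    filter_upwards [eventually_ne_atTop 0] with n hn
    rw [coeff_X_add_C_pow_mul_C_mul_comp hμ0 hn]
    field_simp

section Operator

variable {E : Type*} [NormedAddCommGroup E] [NormedSpace ℂ E]

theorem aeval_apply_eq_sum_range {S : E →L[ℂ] E} {y : E} {m : ℕ} (hy : (S ^ m) y = 0)
    (q : ℂ[X]) : aeval S q y = ∑ d ∈ Finset.range m, q.coeff d • (S ^ d) y := by
  rw [aeval_eq_sum_range' (Nat.lt_succ_self _ |>.trans_le (le_max_left _ m)), sum_apply]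
  refine (Finset.sum_subset (Finset.range_subset_range.2 (le_max_right _ _))
    fun d _ hd => ?_).symm
  rw [smul_apply, ← Nat.sub_add_cancel (not_lt.1 (Finset.mem_range.not.1 hd)),
    pow_add, mul_apply_eq_comp, hy, map_zero, smul_zero]

theorem tendsto_aeval_apply {S : E →L[ℂ] E} {y : E} {m : ℕ} (hy : (S ^ m) y = 0)
    {q : ℕ → ℂ[X]} {q₀ : ℂ[X]}
    (hq : ∀ d < m, Tendsto (fun n => (q n).coeff d) atTop (𝓝 (q₀.coeff d))) :
    Tendsto (fun n => aeval S (q n) y) atTop (𝓝 (aeval S q₀ y)) := by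
  simp_rw [aeval_apply_eq_sum_range hy]
  exact tendsto_finsetSum _ fun d hd => (hq d (Finset.mem_range.1 hd)).smul_const _

def AsymptoticallyMaps (T : E →L[ℂ] E) (a b : E) : Prop :=
  ∃ w : ℕ → E, Tendsto w atTop (𝓝 a) ∧ Tendsto (fun n => (T ^ n) (w n)) atTop (𝓝 b)

theorem AsymptoticallyMaps.add {T : E →L[ℂ] E} {a b a' b' : E} (h : AsymptoticallyMaps T a b)
    (h' : AsymptoticallyMaps T a' b') : AsymptoticallyMaps T (a + a') (b + b') := by
  obtain ⟨w, hw, hTw⟩ := h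
  obtain ⟨w', hw', hTw'⟩ := h'
  exact ⟨w + w', hw.add hw', by simpa only [Pi.add_apply, map_add] using hTw.add hTw'⟩

theorem isMixingOp_of_dense {T : E →L[ℂ] E} {D : Set E} (hD : Dense D)
    (h₀ : ∀ u ∈ D, AsymptoticallyMaps T u 0) (h₁ : ∀ v ∈ D, AsymptoticallyMaps T 0 v) :
    IsMixingOp T := by
  intro U V hU hV hUne hVne
  obtain ⟨u, huD, huU⟩ := hD.exists_mem_open hU hUne
  obtain ⟨v, hvD, hvV⟩ := hD.exists_mem_open hV hVne
  obtain ⟨w, hw, hTw⟩ := (h₀ u huD).add (h₁ v hvD)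
  rw [add_zero] at hw
  rw [zero_add] at hTw
  obtain ⟨N, hN⟩ := eventually_atTop.1
    ((hw.eventually (hU.mem_nhds huU)).and (hTw.eventually (hV.mem_nhds hvV)))
  exact ⟨N, fun n hn => ⟨_, ⟨w n, (hN n hn.le).1, rfl⟩, (hN n hn.le).2⟩⟩

theorem asymptoticallyMaps_smul_one_add_pow_apply {S : E →L[ℂ] E} {μ : ℂ}
    (hμ : ‖μ‖ = 1) {h : ℕ} {y : E} (hy : (S ^ (2 * h)) y = 0) :
    AsymptoticallyMaps (μ • 1 + S) ((S ^ h) y) 0 ∧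
      AsymptoticallyMaps (μ • 1 + S) 0 ((S ^ h) y) := by
  have hT : ∀ (n : ℕ) (q : ℂ[X]),
      ((μ • 1 + S) ^ n) (aeval S q y) = aeval S ((X + C μ) ^ n * q) y := by
    intro n q
    rw [map_mul, map_pow, map_add, aeval_X, aeval_C, Algebra.algebraMap_eq_smul_one, add_comm,
      mul_apply_eq_comp]
  have hSh : (S ^ h) y = aeval S (X ^ h : ℂ[X]) y := by rw [map_pow, aeval_X]
  obtain ⟨p, hp⟩ := exists_tendsto_coeff_X_pow_of_pow_mul_tendsto_zero hμ h
  obtain ⟨q, hq⟩ := exists_tendsto_coeff_zero_of_pow_mul_tendsto_X_pow hμ h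
  refine ⟨⟨fun n => aeval S (p n) y, ?_, ?_⟩, ⟨fun n => aeval S (q n) y, ?_, ?_⟩⟩
  · rw [hSh]
    exact tendsto_aeval_apply hy fun d hd => (hp d hd).1
  · simpa only [hT, map_zero, zero_apply] using
      tendsto_aeval_apply hy (q₀ := 0) fun d hd => by simpa using (hp d hd).2
  · simpa only [map_zero, zero_apply] using
      tendsto_aeval_apply hy (q₀ := 0) fun d hd => by simpa using (hq d hd).1
  · simpa only [hT, hSh] using tendsto_aeval_apply hy fun d hd => (hq d hd).2

end Operator

namespace IsGenBackwardShift

variable {E : Type*} [NormedAddCommGroup E] [NormedSpace ℂ E]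
  {ι : Type*} [Preorder ι] [WellFoundedLT ι] {S : E →L[ℂ] E} {x : ι × ℕ → E}

theorem span_le_maxGenEigenspace_zero (hS : IsGenBackwardShift S x) :
    Submodule.span ℂ (Set.range x) ≤ Module.End.maxGenEigenspace (S : E →ₗ[ℂ] E) 0 := by
  refine Submodule.span_le.2 (Set.range_subset_iff.2 fun p => ?_)
  refine (WellFounded.prod_lex wellFounded_lt wellFounded_lt).induction
    (C := fun p => x p ∈ Module.End.maxGenEigenspace (S : E →ₗ[ℂ] E) 0) p fun p ih => ?_
  obtain ⟨c, hc, hSx, -⟩ := hS p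
  have hSp : S (x p) ∈ Module.End.maxGenEigenspace (S : E →ₗ[ℂ] E) 0 := by
    rw [hSx]
    exact Submodule.finsuppSum_mem _ _ _ _ fun q hq =>
      Submodule.smul_mem _ _ (ih q (hc q (Finsupp.mem_support_iff.2 hq)))
  obtain ⟨k, hk⟩ := (Module.End.mem_maxGenEigenspace _ _ _).1 hSp
  refine (Module.End.mem_maxGenEigenspace _ _ _).2 ⟨k + 1, ?_⟩
  simpa [pow_succ] using hk

theorem exists_pow_apply_eq_zero (hS : IsGenBackwardShift S x) {v : E}
    (hv : v ∈ Submodule.span ℂ (Set.range x)) : ∃ m, (S ^ m) v = 0 := by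
  obtain ⟨m, hm⟩ :=
    (Module.End.mem_maxGenEigenspace _ _ _).1 (hS.span_le_maxGenEigenspace_zero hv)
  rw [zero_smul, sub_zero, ← ContinuousLinearMap.toLinearMap_pow] at hm
  exact ⟨m, hm⟩

theorem span_le_map_span (hS : IsGenBackwardShift S x) :
    Submodule.span ℂ (Set.range x) ≤
      (Submodule.span ℂ (Set.range x)).map (S : E →ₗ[ℂ] E) := by
  classical
  set F := (Submodule.span ℂ (Set.range x)).map (S : E →ₗ[ℂ] E)
  refine Submodule.span_le.2 (Set.range_subset_iff.2 fun p => ?_)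
  refine (WellFounded.prod_lex wellFounded_lt wellFounded_lt).induction (C := fun p => x p ∈ F) p
    fun ⟨ℓ, k⟩ ih => ?_
  obtain ⟨c, hc, hSx, hc₀⟩ := hS (ℓ, k + 1)
  have hck : c (ℓ, k) ≠ 0 := hc₀ le_add_self
  have hpred : ∀ q ∈ c.support.erase (ℓ, k), Prod.Lex (· < ·) (· < ·) q (ℓ, k) := by
    rintro ⟨a, b⟩ hq
    obtain ⟨hne, hq⟩ := Finset.mem_erase.1 hq
    rcases Prod.lex_def.1 (hc _ hq) with h | ⟨rfl, h⟩
    · exact Prod.Lex.left _ _ h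
    · exact Prod.Lex.right _ (lt_of_le_of_ne (Nat.lt_succ_iff.1 h) fun e => hne (by rw [e]))
  have hxk : c (ℓ, k) • x (ℓ, k) =
      S (x (ℓ, k + 1)) - ∑ q ∈ c.support.erase (ℓ, k), c q • x q := by
    rw [hSx, Finsupp.sum, ← Finset.add_sum_erase _ _ (Finsupp.mem_support_iff.2 hck),
      add_sub_cancel_right]
  have hmem : c (ℓ, k) • x (ℓ, k) ∈ F := hxk ▸ F.sub_mem
    (Submodule.mem_map_of_mem (Submodule.subset_span ⟨_, rfl⟩))
    (F.sum_mem fun q hq => F.smul_mem _ (ih q (hpred q hq)))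
  simpa [hck] using F.smul_mem (c (ℓ, k))⁻¹ hmem

theorem exists_mem_span_pow_apply_eq (hS : IsGenBackwardShift S x) (k : ℕ) {v : E}
    (hv : v ∈ Submodule.span ℂ (Set.range x)) :
    ∃ y ∈ Submodule.span ℂ (Set.range x), (S ^ k) y = v := by
  induction k generalizing v with
  | zero => exact ⟨v, hv, rfl⟩
  | succ k ih =>
    obtain ⟨w, hw, rfl⟩ := Submodule.mem_map.1 (hS.span_le_map_span hv)
    obtain ⟨y, hy, rfl⟩ := ih hw
    exact ⟨y, hy, by rw [pow_succ', mul_apply_eq_comp]; rfl⟩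

theorem exists_eq_pow_apply (hS : IsGenBackwardShift S x) {v : E}
    (hv : v ∈ Submodule.span ℂ (Set.range x)) :
    ∃ (h : ℕ) (y : E), (S ^ (2 * h)) y = 0 ∧ (S ^ h) y = v := by
  obtain ⟨h, hh⟩ := hS.exists_pow_apply_eq_zero hv
  obtain ⟨y, -, rfl⟩ := hS.exists_mem_span_pow_apply_eq h hv
  exact ⟨h, y, by rw [two_mul, pow_add, mul_apply_eq_comp, hh], rfl⟩

end IsGenBackwardShift

theorem stmt6_general {X : Type*} [NormedAddCommGroup X] [NormedSpace ℂ X]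
    (S : X →L[ℂ] X) (x : ℕ × ℕ → X)
    (hdense : Dense (Submodule.span ℂ (Set.range x) : Set X))
    (hshift : IsGenBackwardShift S x)
    (lam : ℂ) (hlam : ‖lam‖ = 1) :
    IsMixingOp (lam • (1 : X →L[ℂ] X) + S) := by
  have key : ∀ u ∈ Submodule.span ℂ (Set.range x),
      AsymptoticallyMaps (lam • 1 + S) u 0 ∧ AsymptoticallyMaps (lam • 1 + S) 0 u := by
    intro u hu
    obtain ⟨h, y, hy, rfl⟩ := hshift.exists_eq_pow_apply hu
    exact asymptoticallyMaps_smul_one_add_pow_apply hlam hy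
  exact isMixingOp_of_dense hdense (fun u hu => (key u hu).1) fun u hu => (key u hu).2

theorem stmt6 {X : Type*} [NormedAddCommGroup X] [NormedSpace ℂ X] [CompleteSpace X]
    [TopologicalSpace.SeparableSpace X] (hinf : ¬ FiniteDimensional ℂ X)
    (S : X →L[ℂ] X) (x : ℕ × ℕ → X)
    (hli : LinearIndependent ℂ x)
    (hdense : Dense (Submodule.span ℂ (Set.range x) : Set X))
    (hshift : IsGenBackwardShift S x)
    (lam : ℂ) (hlam : ‖lam‖ = 1) :
    IsMixingOp (lam • (1 : X →L[ℂ] X) + S) :=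
  stmt6_general S x hdense hshift lam hlam
end

section
/- Let X be a separable infinite-dimensional complex Banach space and let S be a bounded linear operator on X whose generalised kernel N∞(S) is dense in X. Then for every ε > 0 there exists a bounded operator S' on X with ‖S − S'‖ < ε such that S' is a generalised backward 1-shift adapted to some linearly independent sequence with dense linear span. -/
/-!
Density of `N∞(S)` in the separable infinite-dimensional space `X` yields a linearly independent
sequence `(xₖ)` with dense span on which `S` is upper triangular, `S xₖ ∈ span {xᵢ | i < k}`:
repeatedly pick `y ∈ N∞(S)` outside the current finite-dimensional span and close to the next
point of a dense sequence, and append those `Sʲ y` not yet in the span, highest power first.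

To make the coefficient of `xₖ` in `S xₖ₊₁` nonzero, add a rank-one operator `Gₖ` with range
`ℂ xₖ`, vanishing on `span {xᵢ | i ≤ k}`, of norm at most `ε 2⁻ᵏ / 4`. The series `∑ Gₖ`
converges to a perturbation of norm at most `ε / 2`, and since `Gⱼ xₖ₊₁ ∈ ℂ xⱼ` for `j < k`,
only `Gₖ` affects that coefficient.
-/

open Set Submodule

section RankOnePerturbation

variable {𝕜 : Type*} [RCLike 𝕜] {X : Type*} [NormedAddCommGroup X] [NormedSpace 𝕜 X]

theorem Submodule.exists_strongDual_eq_zero_on_eq_one_of_notMem {E : Submodule 𝕜 X}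
    [FiniteDimensional 𝕜 E] {z : X} (hz : z ∉ E) :
    ∃ φ : StrongDual 𝕜 X, (∀ v ∈ E, φ v = 0) ∧ φ z = 1 := by
  have : IsClosed (E : Set X) := E.closed_of_finiteDimensional
  have hz' : E.mkQL z ≠ 0 := by simpa [Quotient.mk_eq_zero] using hz
  obtain ⟨ψ, hψ⟩ := SeparatingDual.exists_eq_one (R := 𝕜) hz'
  refine ⟨ψ.comp E.mkQL, fun v hv => ?_, hψ⟩
  simp [(Quotient.mk_eq_zero E).2 hv]

theorem Submodule.exists_norm_le_add_smul_notMem {E : Submodule 𝕜 X} {w : X} (hw : w ∉ E)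
    (a : X) {η : ℝ} (hη : 0 < η) : ∃ δ : 𝕜, ‖δ‖ ≤ η ∧ a + δ • w ∉ E := by
  by_contra! h
  have h₁ := h (η : 𝕜) (by simp [abs_of_pos hη])
  have h₂ := h ((η / 2 : ℝ) : 𝕜) (by simp [abs_of_pos hη, hη.le])
  have hdiff : ((η / 2 : ℝ) : 𝕜) • w ∈ E := by
    convert E.sub_mem h₁ h₂ using 1
    push_cast
    module
  exact hw ((E.smul_mem_iff (by simp [hη.ne'])).1 hdiff)

theorem Submodule.exists_norm_le_add_apply_notMem {E E' : Submodule 𝕜 X} [FiniteDimensional 𝕜 E]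
    {z w : X} (hz : z ∉ E) (hw : w ∉ E') (a : X) {η : ℝ} (hη : 0 < η) :
    ∃ G : X →L[𝕜] X, ‖G‖ ≤ η ∧ (∀ v ∈ E, G v = 0) ∧ (∀ v, G v ∈ 𝕜 ∙ w) ∧ a + G z ∉ E' := by
  obtain ⟨φ, hφE, hφz⟩ := E.exists_strongDual_eq_zero_on_eq_one_of_notMem hz
  obtain ⟨δ, hδ, haδ⟩ := E'.exists_norm_le_add_smul_notMem hw a
    (div_pos hη (by positivity : 0 < ‖φ‖ * ‖w‖ + 1))
  refine ⟨(δ • φ).smulRight w, ?_, fun v hv => by simp [hφE v hv], fun v => ?_, by simpa [hφz]⟩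
  · rw [ContinuousLinearMap.norm_smulRight_apply, norm_smul, mul_assoc]
    calc ‖δ‖ * (‖φ‖ * ‖w‖) ≤ η / (‖φ‖ * ‖w‖ + 1) * (‖φ‖ * ‖w‖ + 1) := by gcongr; linarith
      _ = η := div_mul_cancel₀ _ (by positivity)
  · exact smul_mem _ _ (mem_span_singleton_self w)

end RankOnePerturbation

section BackwardShift

theorem exists_sum_range_smul_of_mem_span_of_notMem {R M : Type*} [Ring R] [AddCommGroup M]
    [Module R M] {x : ℕ → M} {v : M} {k : ℕ} (hv : v ∈ span R (x '' Iio (k + 1)))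
    (hv' : v ∉ span R (x '' Iio k)) :
    ∃ c : ℕ → R, v = ∑ i ∈ Finset.range (k + 1), c i • x i ∧ c k ≠ 0 := by
  rw [← Finset.coe_range, mem_span_image_finset_iff_exists_fun'] at hv
  obtain ⟨c, rfl⟩ := hv
  refine ⟨c, rfl, fun hck => hv' ?_⟩
  rw [Finset.sum_range_succ, hck, zero_smul, add_zero, ← Finset.coe_range]
  exact sum_smul_mem _ _ fun i hi => subset_span (mem_image_of_mem x hi)

variable {X : Type*} [NormedAddCommGroup X] [NormedSpace ℂ X]

theorem isGenBackwardOneShift_of_mem_span_of_notMem {T : X →L[ℂ] X} {x : ℕ → X}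
    (h₀ : T (x 0) = 0)
    (hmem : ∀ k, T (x (k + 1)) ∈ span ℂ (x '' Iio (k + 1)))
    (hnotMem : ∀ k, T (x (k + 1)) ∉ span ℂ (x '' Iio k)) :
    IsGenBackwardOneShift T x := by
  refine ⟨h₀, fun k hk => ?_⟩
  obtain ⟨k, rfl⟩ := Nat.exists_eq_add_of_le' hk
  simpa using exists_sum_range_smul_of_mem_span_of_notMem (hmem k) (hnotMem k)

theorem exists_norm_lt_isGenBackwardOneShift_add [CompleteSpace X] {S : X →L[ℂ] X} {x : ℕ → X}
    (hx : LinearIndependent ℂ x) (hS : ∀ k, S (x k) ∈ span ℂ (x '' Iio k)) {ε : ℝ} (hε : 0 < ε) :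
    ∃ F : X →L[ℂ] X, ‖F‖ < ε ∧ IsGenBackwardOneShift (S + F) x := by
  set E : ℕ → Submodule ℂ X := fun k => span ℂ (x '' Iio k)
  have hEmono : Monotone E := fun i j hij => span_mono (image_mono (Iio_subset_Iio hij))
  have hxE {i k : ℕ} (h : i < k) : x i ∈ E k := subset_span (mem_image_of_mem x h)
  have hxE' (k : ℕ) : x k ∉ E k := hx.notMem_span_image (lt_irrefl k)
  have : ∀ k, FiniteDimensional ℂ (E k) := fun k =>
    FiniteDimensional.span_of_finite ℂ ((finite_Iio k).image x)
  choose G hGnorm hGE hGrange hGnotMem using fun k =>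
    (E (k + 1)).exists_norm_le_add_apply_notMem (hxE' (k + 1)) (hxE' k) (S (x (k + 1)))
      (by positivity : 0 < ε / 4 * (1 / 2) ^ k)
  have hGsum : HasSum (fun k => ε / 4 * (1 / 2 : ℝ) ^ k) (ε / 2) := by
    have := hasSum_geometric_two.mul_left (ε / 4)
    rwa [show ε / 4 * 2 = ε / 2 by ring] at this
  obtain ⟨F, hF⟩ : Summable G := .of_norm_bounded hGsum.summable hGnorm
  have hFx (j : ℕ) : F (x j) = ∑ k ∈ Finset.range j, G k (x j) :=
    (hF.mapL (ContinuousLinearMap.apply ℂ X (x j))).unique <| hasSum_sum_of_ne_finset_zero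
      fun k hk => hGE k _ (hxE (by simpa using hk))
  have hGE' {k j : ℕ} (h : k < j) (v : X) : G k v ∈ E j :=
    span_le.2 (singleton_subset_iff.2 (hxE h)) (hGrange k v)
  have hsplit (k : ℕ) : (S + F) (x (k + 1))
      = (S (x (k + 1)) + G k (x (k + 1))) + ∑ i ∈ Finset.range k, G i (x (k + 1)) := by
    rw [add_apply, hFx, Finset.sum_range_succ]; abel
  have hrest (k : ℕ) : ∑ i ∈ Finset.range k, G i (x (k + 1)) ∈ E k :=
    sum_mem fun i hi => hGE' (Finset.mem_range.1 hi) _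
  refine ⟨F, (hF.tsum_eq ▸ tsum_of_norm_bounded hGsum hGnorm).trans_lt (by linarith),
    isGenBackwardOneShift_of_mem_span_of_notMem ?_ (fun k => ?_) (fun k => ?_)⟩
  · simpa [hFx] using hS 0
  · rw [hsplit]
    exact add_mem (add_mem (hS _) (hGE' k.lt_succ_self _)) (hEmono k.le_succ (hrest k))
  · rw [hsplit]
    exact fun h => hGnotMem k (((E k).add_mem_iff_left (hrest k)).1 h)

end BackwardShift

section Triangularization

theorem Dense.exists_notMem_dist_lt {𝕜 : Type*} [NontriviallyNormedField 𝕜] [CompleteSpace 𝕜]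
    {X : Type*} [NormedAddCommGroup X] [NormedSpace 𝕜 X] (hinf : ¬ FiniteDimensional 𝕜 X)
    {K : Set X} (hK : Dense K) (E : Submodule 𝕜 X) [FiniteDimensional 𝕜 E] (t : X) {r : ℝ}
    (hr : 0 < r) : ∃ y ∈ K, y ∉ E ∧ dist y t < r := by
  have hE : IsClosed (E : Set X) := E.closed_of_finiteDimensional
  have hint : interior (E : Set X) = ∅ := by
    refine eq_empty_iff_forall_notMem.2 fun v hv => hinf ?_
    obtain rfl := E.eq_top_of_nonempty_interior' ⟨v, hv⟩
    exact topEquiv.finiteDimensional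
  obtain ⟨y, hyt, hyK, hyE⟩ := Metric.dense_iff.1
    (hK.inter_of_isOpen_right (interior_eq_empty_iff_dense_compl.1 hint) hE.isOpen_compl) t r hr
  exact ⟨y, hyK, hyE, hyt⟩

variable {𝕜 : Type*} [NontriviallyNormedField 𝕜] {X : Type*} [NormedAddCommGroup X]
  [NormedSpace 𝕜 X]

/-- Only `vec 0, …, vec (length - 1)` belong to the family; later values of `vec` are junk. -/
structure TriangularPrefix (S : X →L[𝕜] X) where
  length : ℕ
  vec : ℕ → X
  linearIndepOn : LinearIndepOn 𝕜 vec (Iio length)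
  apply_mem_span : ∀ k < length, S (vec k) ∈ span 𝕜 (vec '' Iio k)

namespace TriangularPrefix

variable {S : X →L[𝕜] X}

instance : Preorder (TriangularPrefix S) where
  le p q := p.length ≤ q.length ∧ EqOn q.vec p.vec (Iio p.length)
  le_refl p := ⟨le_rfl, eqOn_refl _ _⟩
  le_trans p q r hpq hqr :=
    ⟨hpq.1.trans hqr.1, fun i hi => (hqr.2 (Iio_subset_Iio hpq.1 hi)).trans (hpq.2 hi)⟩

def nil : TriangularPrefix S where
  length := 0
  vec := 0
  linearIndepOn := by simp
  apply_mem_span := by simp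

def spanVec (p : TriangularPrefix S) : Submodule 𝕜 X := span 𝕜 (p.vec '' Iio p.length)

instance (p : TriangularPrefix S) : FiniteDimensional 𝕜 p.spanVec :=
  FiniteDimensional.span_of_finite 𝕜 ((finite_Iio _).image _)

theorem span_image_eq_spanVec {p q : TriangularPrefix S} (h : p ≤ q) :
    span 𝕜 (q.vec '' Iio p.length) = p.spanVec := by
  rw [h.2.image_eq, spanVec]

def append (p : TriangularPrefix S) (z : X) (hz : z ∉ p.spanVec) (hSz : S z ∈ p.spanVec) :
    TriangularPrefix S where
  length := p.length + 1
  vec := Function.update p.vec p.length z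
  linearIndepOn := by
    have hEq : EqOn (Function.update p.vec p.length z) p.vec (Iio p.length) :=
      fun i hi => Function.update_of_ne (ne_of_lt hi) _ _
    rw [← Order.succ_eq_add_one, Order.Iio_succ_eq_insert, linearIndepOn_insert self_notMem_Iio,
      hEq.image_eq, Function.update_self]
    exact ⟨p.linearIndepOn.congr hEq.symm, hz⟩
  apply_mem_span k hk := by
    have hEq : EqOn (Function.update p.vec p.length z) p.vec (Iio k) :=
      fun i hi => Function.update_of_ne (ne_of_lt (lt_of_lt_of_le hi (Nat.lt_succ_iff.1 hk))) _ _
    rw [hEq.image_eq]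
    rcases (Nat.lt_succ_iff.1 hk).lt_or_eq with hk | rfl
    · rw [Function.update_of_ne hk.ne]
      exact p.apply_mem_span k hk
    · rwa [Function.update_self]

variable {p : TriangularPrefix S} {z : X} {hz : z ∉ p.spanVec} {hSz : S z ∈ p.spanVec}

theorem le_append : p ≤ p.append z hz hSz :=
  ⟨Nat.le_succ _, fun _ hi => Function.update_of_ne (ne_of_lt hi) _ _⟩

theorem mem_spanVec_append : z ∈ (p.append z hz hSz).spanVec :=
  subset_span ⟨p.length, Nat.lt_succ_self _, Function.update_self _ _ _⟩

theorem exists_le_mem_spanVec (p : TriangularPrefix S) {y : X} {M : ℕ}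
    (hM : (S ^ M) y ∈ p.spanVec) : ∃ q, p ≤ q ∧ y ∈ q.spanVec := by
  induction M generalizing p with
  | zero => exact ⟨p, le_rfl, by simpa using hM⟩
  | succ M ih =>
    by_cases h : (S ^ M) y ∈ p.spanVec
    · exact ih p h
    · have hS : S ((S ^ M) y) ∈ p.spanVec := by
        rwa [← mul_apply_eq_comp, ← pow_succ']
      obtain ⟨q, hq, hy⟩ := ih (p.append _ h hS) mem_spanVec_append
      exact ⟨q, le_append.trans hq, hy⟩

theorem exists_length_lt_dist_lt [CompleteSpace 𝕜] (hinf : ¬ FiniteDimensional 𝕜 X)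
    (hK : Dense {v : X | ∃ m : ℕ, (S ^ m) v = 0}) (p : TriangularPrefix S) (t : X) {r : ℝ}
    (hr : 0 < r) : ∃ q, p ≤ q ∧ p.length < q.length ∧ ∃ v ∈ q.spanVec, dist v t < r := by
  obtain ⟨y, ⟨m, hm⟩, hyp, hyt⟩ := hK.exists_notMem_dist_lt hinf p.spanVec t hr
  obtain ⟨q, hpq, hyq⟩ := p.exists_le_mem_spanVec (M := m) (by rw [hm]; exact zero_mem _)
  refine ⟨q, hpq, hpq.1.lt_of_ne fun h => hyp ?_, y, hyq, hyt⟩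
  rwa [← span_image_eq_spanVec hpq, h]

theorem exists_linearIndependent_of_strictMono {st : ℕ → TriangularPrefix S} (hst : Monotone st)
    (hlen : StrictMono fun n => (st n).length) :
    ∃ x : ℕ → X, LinearIndependent 𝕜 x ∧ (∀ k, S (x k) ∈ span 𝕜 (x '' Iio k)) ∧
      ∀ n, (st n).spanVec ≤ span 𝕜 (range x) := by
  have hge (n : ℕ) : n < (st (n + 1)).length := (hlen.id_le (n + 1)).trans_lt' n.lt_succ_self
  set x : ℕ → X := fun k => (st (k + 1)).vec k
  have hx (n : ℕ) : EqOn x (st n).vec (Iio (st n).length) := fun k hk => by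
    rcases le_total n (k + 1) with h | h
    · exact (hst h).2 hk
    · exact ((hst h).2 (hge k)).symm
  refine ⟨x, ?_, fun k => ?_, fun n => ?_⟩
  · rw [← linearIndepOn_univ_iff, ← iUnion_Iio]
    exact linearIndepOn_iUnion_of_directed monotone_Iio.directed_le fun n =>
      ((st n).linearIndepOn.congr (hx n).symm).mono (Iio_subset_Iio (hlen.id_le n))
  · rw [((hx (k + 1)).mono (Iio_subset_Iio (hge k).le)).image_eq]
    exact (st (k + 1)).apply_mem_span k (hge k)
  · rw [spanVec, ← (hx n).image_eq]
    exact span_mono (image_subset_range _ _)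

end TriangularPrefix

theorem exists_linearIndependent_dense_span_apply_mem_span {𝕜 : Type*} [NontriviallyNormedField 𝕜]
    [CompleteSpace 𝕜] {X : Type*} [NormedAddCommGroup X] [NormedSpace 𝕜 X]
    [TopologicalSpace.SeparableSpace X] (hinf : ¬ FiniteDimensional 𝕜 X) {S : X →L[𝕜] X}
    (hK : Dense {v : X | ∃ m : ℕ, (S ^ m) v = 0}) :
    ∃ x : ℕ → X, LinearIndependent 𝕜 x ∧ Dense (span 𝕜 (range x) : Set X) ∧
      ∀ k, S (x k) ∈ span 𝕜 (x '' Iio k) := by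
  obtain ⟨u, hu⟩ := TopologicalSpace.exists_dense_seq X
  -- Step `n` approximates `u m` to within `1 / (j + 1)`, where `n = Nat.pair m j`.
  choose next hle hlt happrox using fun (n : ℕ) (p : TriangularPrefix S) =>
    p.exists_length_lt_dist_lt hinf hK (u n.unpair.1) (Nat.one_div_pos_of_nat (n := n.unpair.2))
  obtain ⟨st, hst⟩ : ∃ st : ℕ → TriangularPrefix S, ∀ n, st (n + 1) = next n (st n) :=
    ⟨fun n => Nat.rec .nil next n, fun _ => rfl⟩
  obtain ⟨x, hx, hxS, hspan⟩ := TriangularPrefix.exists_linearIndependent_of_strictMono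
    (monotone_nat_of_le_succ fun n => hst n ▸ hle n (st n))
    (strictMono_nat_of_lt_succ fun n => hst n ▸ hlt n (st n))
  refine ⟨x, hx, dense_closure.1 (hu.mono (range_subset_iff.2 fun m => ?_)), hxS⟩
  refine Metric.mem_closure_iff.2 fun r hr => ?_
  obtain ⟨j, hj⟩ := exists_nat_one_div_lt hr
  obtain ⟨v, hv, hvu⟩ := happrox (Nat.pair m j) (st (Nat.pair m j))
  rw [← hst] at hv
  rw [Nat.unpair_pair] at hvu
  exact ⟨v, hspan _ hv, by rw [dist_comm]; exact hvu.trans hj⟩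

end Triangularization

theorem stmt7 {X : Type*} [NormedAddCommGroup X] [NormedSpace ℂ X] [CompleteSpace X]
    [TopologicalSpace.SeparableSpace X] (hinf : ¬ FiniteDimensional ℂ X)
    (S : X →L[ℂ] X)
    (hdense : Dense {v : X | ∃ m : ℕ, 1 ≤ m ∧ (S ^ m) v = 0}) :
    ∀ ε : ℝ, 0 < ε → ∃ S' : X →L[ℂ] X, ‖S - S'‖ < ε ∧
      ∃ x : ℕ → X, LinearIndependent ℂ x ∧
        Dense (Submodule.span ℂ (Set.range x) : Set X) ∧
        IsGenBackwardOneShift S' x := by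
  intro ε hε
  have hK : Dense {v : X | ∃ m : ℕ, (S ^ m) v = 0} :=
    hdense.mono fun _ hv => hv.imp fun _ => And.right
  obtain ⟨x, hx, hspan, hS⟩ := exists_linearIndependent_dense_span_apply_mem_span hinf hK
  obtain ⟨F, hF, hshift⟩ := exists_norm_lt_isGenBackwardOneShift_add hx hS hε
  exact ⟨S + F, by rwa [sub_add_cancel_left, norm_neg], x, hx, hspan, hshift⟩
end
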